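/- arXiv:1201.5986 — 4 statements merged into one kernel-verified Lean document; each statement's English description precedes it below -/
import Mathlib

section
/- The seed mutation is involutive: for any seed Σ = (x, ex, B) with B a locally finite skew-symmetrisable integer matrix indexed by x, and any exchangeable variable x ∈ ex, applying the mutation μ_x and then mutating again at the new variable x' returns the original seed, i.e. μ_{x'}(μ_x(Σ)) = Σ. -/
open scoped BigOperators
open scoped Classical

noncomputable section

universe u v w x₀

/-- A seed in an ambient field `K`: a cluster of elements of `K`, a distinguished subset
of exchangeable variables, and an exchange matrix indexed by `K` (only the entries on
the cluster are relevant). -/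
structure Seed (K : Type u) [Field K] : Type u where
  cluster : Set K
  ex : Set K
  ex_subset : ex ⊆ cluster
  B : K → K → ℤ

/-- Fomin–Zelevinsky matrix mutation in direction `k`. -/
def mutB {I : Type u} (B : I → I → ℤ) (k : I) : I → I → ℤ := fun y z =>
  if y = k ∨ z = k then -B y z
  else B y z + (|B y k| * B k z + B y k * |B k z|) / 2

namespace Seed

variable {K : Type u} {L : Type v} [Field K] [Field L]

/-- Local finiteness of the exchange matrix of a seed. -/
def LocFinite (S : Seed K) : Prop :=
  ∀ y ∈ S.cluster,
    {z | z ∈ S.cluster ∧ S.B y z ≠ 0}.Finite ∧ {z | z ∈ S.cluster ∧ S.B z y ≠ 0}.Finite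

/-- Skew-symmetrisability witnessed by a family `d` of positive integers. -/
def SkewSymmetrizableWith (S : Seed K) (d : K → ℤ) : Prop :=
  (∀ y ∈ S.cluster, 0 < d y) ∧
    ∀ y ∈ S.cluster, ∀ z ∈ S.cluster, d y * S.B y z = -(d z * S.B z y)

def SkewSymmetrizable (S : Seed K) : Prop := ∃ d, S.SkewSymmetrizableWith d

/-- The new cluster variable created by mutation of `S` in direction `x`:
`x * x' = ∏_{b_{xy} > 0} y ^ (b_{xy}) + ∏_{b_{xy} < 0} y ^ (-b_{xy})`. -/
def mutVar (S : Seed K) (x : K) : K :=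
  ((∏ᶠ y ∈ {y | y ∈ S.cluster ∧ 0 < S.B x y}, y ^ (S.B x y).toNat) +
      ∏ᶠ y ∈ {y | y ∈ S.cluster ∧ S.B x y < 0}, y ^ (-S.B x y).toNat) / x

/-- Mutation of a seed in direction `x`. -/
def mutate (S : Seed K) (x : K) : Seed K where
  cluster := insert (S.mutVar x) (S.cluster \ {x})
  ex := insert (S.mutVar x) (S.ex \ {x})
  ex_subset := Set.insert_subset_insert (Set.diff_subset_diff_left S.ex_subset)
  B := fun y z =>
    mutB S.B x (if y = S.mutVar x then x else y) (if z = S.mutVar x then x else z)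

/-- The correspondence `μ_{x,Σ}` on cluster variables. -/
def mutMap (S : Seed K) (x : K) : K → K := fun y => if y = x then S.mutVar x else y

/-- Iterated mutation along a list of directions. -/
def mutateSeq (S : Seed K) : List K → Seed K
  | [] => S
  | y :: l => (S.mutate y).mutateSeq l

/-- A sequence is `Σ`-admissible if each entry is exchangeable in the seed obtained by
mutating along the previous entries. -/
def Admissible (S : Seed K) : List K → Prop
  | [] => True
  | y :: l => y ∈ S.ex ∧ (S.mutate y).Admissible l

/-- The correspondence `μ_{x_n} ∘ ⋯ ∘ μ_{x_1, Σ}` on cluster variables. -/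
def mutSeqMap (S : Seed K) : List K → K → K
  | [] => id
  | y :: l => (S.mutate y).mutSeqMap l ∘ S.mutMap y

/-- The set of all cluster variables of the rooted cluster algebra of `S`. -/
def clusterVars (S : Seed K) : Set K :=
  ⋃ (l : List K) (_ : S.Admissible l), (S.mutateSeq l).cluster

/-- The rooted cluster algebra of `S`, as a subring (ℤ-subalgebra) of the ambient field. -/
def algebra (S : Seed K) : Subring K := Subring.closure S.clusterVars

/-- Equality of seeds (exchange matrices are compared on the cluster only). -/
def SameSeed (S T : Seed K) : Prop :=
  S.cluster = T.cluster ∧ S.ex = T.ex ∧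
    ∀ y ∈ S.cluster, ∀ z ∈ S.cluster, S.B y z = T.B y z

/-- The opposite seed. -/
def op (S : Seed K) : Seed K := ⟨S.cluster, S.ex, S.ex_subset, fun y z => -S.B y z⟩

/-- The simplification of a seed: all exchange matrix entries between pairs of frozen
variables are set to zero. -/
def simplify (S : Seed K) : Seed K :=
  ⟨S.cluster, S.ex, S.ex_subset, fun y z =>
    if y ∈ S.cluster \ S.ex ∧ z ∈ S.cluster \ S.ex then 0 else S.B y z⟩

/-- The full subseed of `S` on a subset `s` of the cluster. -/
def subseed (S : Seed K) (s : Set K) : Seed K :=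
  ⟨s, S.ex ∩ s, Set.inter_subset_right, S.B⟩

/-- The lower bound `ℤ[x \ ex][ex ∪ ex']` of the cluster algebra. -/
def lowerBound (S : Seed K) : Subring K :=
  Subring.closure (S.cluster ∪ ⋃ y ∈ S.ex, (S.mutate y).ex)

/-- The ring of Laurent polynomials `ℤ[x \ ex][e^{±1}]`. -/
def laurentRing (S : Seed K) (e : Set K) : Subring K :=
  Subring.closure ((S.cluster \ S.ex) ∪ e ∪ (fun a => a⁻¹) '' e)

/-- The upper bound `ℤ[x\ex][ex^{±1}] ∩ ⋂_{y ∈ ex} ℤ[x\ex][μ_y(ex)^{±1}]`. -/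
def upperBound (S : Seed K) : Subring K :=
  S.laurentRing S.ex ⊓ ⨅ y ∈ S.ex, S.laurentRing (S.mutate y).ex

end Seed

/-- An isomorphism of seeds along a map `φ` of ambient fields. -/
def SeedIso {K : Type u} {L : Type v} [Field K] [Field L]
    (S : Seed K) (T : Seed L) (φ : K → L) : Prop :=
  Set.BijOn φ S.cluster T.cluster ∧ Set.BijOn φ S.ex T.ex ∧
    ∀ y ∈ S.cluster, ∀ z ∈ S.cluster, T.B (φ y) (φ z) = S.B y z

def IsIsoSeeds {K : Type u} {L : Type v} [Field K] [Field L]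
    (S : Seed K) (T : Seed L) : Prop :=
  ∃ φ : K → L, SeedIso S T φ

/-- A genuine seed: a countable, algebraically independent cluster generating the
ambient field, with a locally finite skew-symmetrisable exchange matrix. -/
structure IsSeed {K : Type u} [Field K] (S : Seed K) : Prop where
  countable : S.cluster.Countable
  free : AlgebraicIndependent ℤ ((↑) : S.cluster → K)
  ambient : Subfield.closure S.cluster = ⊤
  locFin : S.LocFinite
  skew : S.SkewSymmetrizable

/-- The map on ambient fields underlying a ring homomorphism defined on a subring
(extended by zero outside the subring). -/
def subFn {K : Type u} {L : Type v} [Field K] [Field L] {R : Subring K}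
    (f : R →+* L) : K → L :=
  fun a => if h : a ∈ R then f ⟨a, h⟩ else 0

/-- The map on ambient fields underlying a ring homomorphism between rooted cluster
algebras (extended by zero outside of `A(S)`). -/
def mapFn {K : Type u} {L : Type v} [Field K] [Field L] (S : Seed K) {T : Seed L}
    (f : S.algebra →+* T.algebra) : K → L :=
  fun a => if h : a ∈ S.algebra then (f ⟨a, h⟩ : L) else 0

/-- A sequence is biadmissible when it is admissible for the source seed and its image
is admissible for the target seed. -/
def Biadmissible {K : Type u} {L : Type v} [Field K] [Field L]
    (S : Seed K) (T : Seed L) (g : K → L) (l : List K) : Prop :=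
  S.Admissible l ∧ T.Admissible (l.map g)

/-- The rooted cluster morphism conditions (CM1), (CM2), (CM3) for a ring homomorphism
`f : A(S) →+* A(T)`. -/
structure IsRCM {K : Type u} {L : Type v} [Field K] [Field L]
    (S : Seed K) (T : Seed L) (f : S.algebra →+* T.algebra) : Prop where
  cm1 : ∀ y ∈ S.cluster, mapFn S f y ∈ T.cluster ∪ Set.range ((↑) : ℤ → L)
  cm2 : ∀ y ∈ S.ex, mapFn S f y ∈ T.ex ∪ Set.range ((↑) : ℤ → L)
  cm3 : ∀ l : List K, Biadmissible S T (mapFn S f) l → ∀ y ∈ S.cluster,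
    mapFn S f (S.mutSeqMap l y) = T.mutSeqMap (l.map (mapFn S f)) (mapFn S f y)

/-- The image seed `f(Σ) = (x' ∩ f(x), ex' ∩ f(ex), B'[f(x)])` of a morphism. -/
def imageSeed {K : Type u} {L : Type v} [Field K] [Field L] (S : Seed K) {T : Seed L}
    (f : S.algebra →+* T.algebra) : Seed L :=
  ⟨T.cluster ∩ (mapFn S f '' S.cluster), T.ex ∩ (mapFn S f '' S.ex),
    Set.inter_subset_inter T.ex_subset (Set.image_mono S.ex_subset), T.B⟩

/-- A bundled object of the category of rooted cluster algebras: an ambient field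
together with a seed in it. -/
structure ClusObj : Type (x₀ + 1) where
  carrier : Type x₀
  [fieldStr : Field carrier]
  seed : Seed carrier

attribute [instance] ClusObj.fieldStr

/-- `Δ` separates `s₁` and `s₂` in the seed `S`. -/
def Separates {K : Type u} [Field K] (S : Seed K) (Δ s₁ s₂ : Set K) : Prop :=
  Δ ⊆ S.cluster \ S.ex ∧ S.cluster = s₁ ∪ s₂ ∪ Δ ∧
    Disjoint s₁ s₂ ∧ Disjoint s₁ Δ ∧ Disjoint s₂ Δ ∧
    ∀ y ∈ s₁, ∀ z ∈ s₂, S.B y z = 0 ∧ S.B z y = 0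

/-- Two seeds are glueable along frozen subsets `Δ₁`, `Δ₂` via `φ` when the full
subseeds on `Δ₁` and `Δ₂` are isomorphic along `φ`. -/
def Glueable {K : Type u} {L : Type v} [Field K] [Field L] (S₁ : Seed K) (S₂ : Seed L)
    (Δ₁ : Set K) (Δ₂ : Set L) (φ : K → L) : Prop :=
  Δ₁ ⊆ S₁.cluster \ S₁.ex ∧ Δ₂ ⊆ S₂.cluster \ S₂.ex ∧
    SeedIso (S₁.subseed Δ₁) (S₂.subseed Δ₂) φ

/-- `Sg` is the amalgamated sum of `S₁` and `S₂` along `Δ₁ ≅ Δ₂`, with respect to the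
identifications `e₁`, `e₂` of the ambient variables. -/
structure IsAmalgamatedSum {K : Type u} {L : Type v} {F : Type w}
    [Field K] [Field L] [Field F]
    (S₁ : Seed K) (S₂ : Seed L) (Δ₁ : Set K) (Δ₂ : Set L) (φ : K → L)
    (Sg : Seed F) (e₁ : K → F) (e₂ : L → F) : Prop where
  inj₁ : Set.InjOn e₁ S₁.cluster
  inj₂ : Set.InjOn e₂ S₂.cluster
  compat : ∀ z ∈ Δ₁, e₁ z = e₂ (φ z)
  glueDelta : e₁ '' Δ₁ = e₂ '' Δ₂
  disj₁ : (e₁ '' (S₁.cluster \ Δ₁)) ∩ (e₂ '' S₂.cluster) = ∅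
  disj₂ : (e₂ '' (S₂.cluster \ Δ₂)) ∩ (e₁ '' S₁.cluster) = ∅
  cluster_eq : Sg.cluster = e₁ '' S₁.cluster ∪ e₂ '' S₂.cluster
  ex_eq : Sg.ex = e₁ '' S₁.ex ∪ e₂ '' S₂.ex
  matrix₁ : ∀ y ∈ S₁.cluster, ∀ z ∈ S₁.cluster, Sg.B (e₁ y) (e₁ z) = S₁.B y z
  matrix₂ : ∀ y ∈ S₂.cluster, ∀ z ∈ S₂.cluster, Sg.B (e₂ y) (e₂ z) = S₂.B y z
  matrix₀ : ∀ y ∈ S₁.cluster \ Δ₁, ∀ z ∈ S₂.cluster \ Δ₂,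
    Sg.B (e₁ y) (e₂ z) = 0 ∧ Sg.B (e₂ z) (e₁ y) = 0

lemma half_cancel_aux (p q : ℤ) :
    (|p| * q + p * |q|) / 2 + (-(|p| * q + p * |q|)) / 2 = 0 := by
  have h : Even (|p| * q + p * |q|) := by
    rcases abs_cases p with ⟨hp,_⟩|⟨hp,_⟩ <;> rcases abs_cases q with ⟨hq,_⟩|⟨hq,_⟩ <;>
      rw [hp, hq]
    · exact ⟨p * q, by ring⟩
    · exact ⟨0, by ring⟩
    · exact ⟨0, by ring⟩
    · exact ⟨-(p * q), by ring⟩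
  obtain ⟨k, hk⟩ := h
  omega

/-- mutation of seeds is involutive: `μ_{x'}(μ_x(Σ)) = Σ`. -/
theorem mutation_involutive {K : Type u} [Field K] (S : Seed K) (hS : IsSeed S)
    (x : K) (hx : x ∈ S.ex) :
    Seed.SameSeed ((S.mutate x).mutate (S.mutVar x)) S := by
  classical
  have hxC : x ∈ S.cluster := S.ex_subset hx
  obtain ⟨d, hdpos, hskew⟩ := hS.skew
  have hBxx : S.B x x = 0 := by
    have h1 := hskew x hxC x hxC
    have h2 := hdpos x hxC
    have h3 : d x * S.B x x = 0 := by linarith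
    rcases mul_eq_zero.mp h3 with h | h
    · omega
    · exact h
  -- the two monomials
  set Pos : Set K := {y | y ∈ S.cluster ∧ 0 < S.B x y} with hPosDef
  set Neg : Set K := {y | y ∈ S.cluster ∧ S.B x y < 0} with hNegDef
  set M : K := ∏ᶠ y ∈ Pos, y ^ (S.B x y).toNat with hMdef
  set N : K := ∏ᶠ y ∈ Neg, y ^ (-S.B x y).toNat with hNdef
  have hmv : S.mutVar x = (M + N) / x := rfl
  have hPosF : Pos.Finite :=
    (hS.locFin x hxC).1.subset (fun y hy => ⟨hy.1, ne_of_gt hy.2⟩)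
  have hNegF : Neg.Finite :=
    (hS.locFin x hxC).1.subset (fun y hy => ⟨hy.1, ne_of_lt hy.2⟩)
  -- polynomial setup
  set v : ↥S.cluster → K := ((↑) : S.cluster → K) with hvdef
  have hinj : Function.Injective (MvPolynomial.aeval v :
      MvPolynomial ↥S.cluster ℤ →ₐ[ℤ] K) := hS.free
  have hPosF' : ((v ⁻¹' Pos) : Set ↥S.cluster).Finite :=
    hPosF.preimage Subtype.val_injective.injOn
  have hNegF' : ((v ⁻¹' Neg) : Set ↥S.cluster).Finite :=
    hNegF.preimage Subtype.val_injective.injOn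
  set tP : Finset ↥S.cluster := hPosF'.toFinset with htP
  set tN : Finset ↥S.cluster := hNegF'.toFinset with htN
  have hPset : Pos = ↑(tP.image v) := by
    ext y
    simp only [Finset.coe_image, Set.mem_image, Finset.mem_coe, htP,
      Set.Finite.mem_toFinset, Set.mem_preimage]
    constructor
    · intro hy
      exact ⟨⟨y, hy.1⟩, hy, rfl⟩
    · rintro ⟨i, hi, rfl⟩
      exact hi
  have hNset : Neg = ↑(tN.image v) := by
    ext y
    simp only [Finset.coe_image, Set.mem_image, Finset.mem_coe, htN,
      Set.Finite.mem_toFinset, Set.mem_preimage]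
    constructor
    · intro hy
      exact ⟨⟨y, hy.1⟩, hy, rfl⟩
    · rintro ⟨i, hi, rfl⟩
      exact hi
  have hMprod : M = ∏ i ∈ tP, (v i) ^ (S.B x (v i)).toNat := by
    rw [hMdef, hPset, finprod_mem_coe_finset,
      Finset.prod_image (fun a _ b _ h => Subtype.val_injective h)]
  have hNprod : N = ∏ i ∈ tN, (v i) ^ (-S.B x (v i)).toNat := by
    rw [hNdef, hNset, finprod_mem_coe_finset,
      Finset.prod_image (fun a _ b _ h => Subtype.val_injective h)]
  set pM : MvPolynomial ↥S.cluster ℤ :=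
    ∏ i ∈ tP, MvPolynomial.X i ^ (S.B x (v i)).toNat with hpM
  set pN : MvPolynomial ↥S.cluster ℤ :=
    ∏ i ∈ tN, MvPolynomial.X i ^ (-S.B x (v i)).toNat with hpN
  have haevM : MvPolynomial.aeval v pM = M := by
    rw [hpM, map_prod, hMprod]
    simp [map_pow]
  have haevN : MvPolynomial.aeval v pN = N := by
    rw [hpN, map_prod, hNprod]
    simp [map_pow]
  set E : MvPolynomial ↥S.cluster ℤ →+* ℤ :=
    MvPolynomial.eval (fun i => if v i = x then 0 else 1) with hE
  have hEM : E pM = 1 := by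
    rw [hpM, map_prod]
    refine Finset.prod_eq_one (fun i hi => ?_)
    have hiP : v i ∈ Pos := by
      simpa [htP, Set.Finite.mem_toFinset] using hi
    have hix : v i ≠ x := by
      intro h
      rw [h, hPosDef] at hiP
      have h2 := hiP.2
      rw [hBxx] at h2
      exact absurd h2 (lt_irrefl 0)
    simp [hE, hix]
  have hEN : E pN = 1 := by
    rw [hpN, map_prod]
    refine Finset.prod_eq_one (fun i hi => ?_)
    have hiP : v i ∈ Neg := by
      simpa [htN, Set.Finite.mem_toFinset] using hi
    have hix : v i ≠ x := by
      intro h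
      rw [h, hNegDef] at hiP
      have h2 := hiP.2
      rw [hBxx] at h2
      exact absurd h2 (lt_irrefl 0)
    simp [hE, hix]
  have hMN0 : M + N ≠ 0 := by
    intro h
    have h0 : MvPolynomial.aeval v (pM + pN) = MvPolynomial.aeval v (0 : MvPolynomial ↥S.cluster ℤ) := by
      simp [map_add, haevM, haevN, h]
    have h1 := hinj h0
    apply_fun E at h1
    simp [map_add, hEM, hEN] at h1
  have hx0 : x ≠ 0 := by
    intro h
    have h0 : (MvPolynomial.aeval v : MvPolynomial ↥S.cluster ℤ →ₐ[ℤ] K)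
          (MvPolynomial.X ⟨x, hxC⟩) =
        (MvPolynomial.aeval v : MvPolynomial ↥S.cluster ℤ →ₐ[ℤ] K) 0 := by
      simp [hvdef, h]
    exact MvPolynomial.X_ne_zero _ (hinj h0)
  have hxx' : x * S.mutVar x = M + N := by
    rw [hmv, mul_div_cancel₀ _ hx0]
  have hx'0 : S.mutVar x ≠ 0 := by
    rw [hmv]; exact div_ne_zero hMN0 hx0
  have hx'C : S.mutVar x ∉ S.cluster := by
    intro hyC
    have hpoly : MvPolynomial.aeval v
        ((MvPolynomial.X (⟨x, hxC⟩ : ↥S.cluster) *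
          MvPolynomial.X (⟨S.mutVar x, hyC⟩ : ↥S.cluster) : MvPolynomial ↥S.cluster ℤ)) =
        MvPolynomial.aeval v (pM + pN) := by
      simp only [map_mul, map_add, MvPolynomial.aeval_X, haevM, haevN]
      exact hxx'
    have hpoly2 := hinj hpoly
    apply_fun E at hpoly2
    simp only [map_mul, map_add, hEM, hEN, hE, MvPolynomial.eval_X, hvdef] at hpoly2
    simp at hpoly2
    rw [hE] at hEM hEN
    simp only [hvdef] at hEM hEN
    simp [hEM, hEN] at hpoly2
  set x' : K := S.mutVar x with hx'def
  set S1 : Seed K := S.mutate x with hS1def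
  have hS1cluster : S1.cluster = insert x' (S.cluster \ {x}) := rfl
  have hS1B : ∀ a b : K, S1.B a b =
      mutB S.B x (if a = x' then x else a) (if b = x' then x else b) := fun a b => rfl
  -- entries of mutated matrix
  have h1 : ∀ z ∈ S.cluster, S1.B x' z = -S.B x z := by
    intro z hz
    have hz' : z ≠ x' := fun h => hx'C (h ▸ hz)
    rw [hS1B]
    simp [mutB, hz']
  have h2 : ∀ y_ ∈ S.cluster, S1.B y_ x' = -S.B y_ x := by
    intro y hy
    have hy' : y ≠ x' := fun h => hx'C (h ▸ hy)
    rw [hS1B]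
    simp [mutB, hy']
  have h4 : S1.B x' x' = 0 := by
    rw [hS1B]
    simp [mutB, hBxx]
  have h3 : ∀ y_ ∈ S.cluster, ∀ z ∈ S.cluster, y_ ≠ x → z ≠ x →
      S1.B y_ z = S.B y_ z + (|S.B y_ x| * S.B x z + S.B y_ x * |S.B x z|) / 2 := by
    intro y hy z hz hyx hzx
    have hy' : y ≠ x' := fun h => hx'C (h ▸ hy)
    have hz' : z ≠ x' := fun h => hx'C (h ▸ hz)
    rw [hS1B, if_neg hy', if_neg hz']
    simp only [mutB]
    rw [if_neg (by simp [hyx, hzx])]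
  -- the sets defining the second mutation
  have hPos1 : {y | y ∈ S1.cluster ∧ 0 < S1.B x' y} = Neg := by
    ext y
    simp only [Set.mem_setOf_eq, hS1cluster, Set.mem_insert_iff, Set.mem_diff,
      Set.mem_singleton_iff, hNegDef]
    constructor
    · rintro ⟨hy | ⟨hyC, hyx⟩, hpos⟩
      · rw [hy, h4] at hpos; exact absurd hpos (lt_irrefl 0)
      · rw [h1 y hyC] at hpos
        exact ⟨hyC, by omega⟩
    · rintro ⟨hyC, hneg⟩
      have hyx : y ≠ x := fun h => by rw [h, hBxx] at hneg; exact absurd hneg (lt_irrefl 0)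
      exact ⟨Or.inr ⟨hyC, hyx⟩, by rw [h1 y hyC]; omega⟩
  have hNeg1 : {y | y ∈ S1.cluster ∧ S1.B x' y < 0} = Pos := by
    ext y
    simp only [Set.mem_setOf_eq, hS1cluster, Set.mem_insert_iff, Set.mem_diff,
      Set.mem_singleton_iff, hPosDef]
    constructor
    · rintro ⟨hy | ⟨hyC, hyx⟩, hpos⟩
      · rw [hy, h4] at hpos; exact absurd hpos (lt_irrefl 0)
      · rw [h1 y hyC] at hpos
        exact ⟨hyC, by omega⟩
    · rintro ⟨hyC, hneg⟩
      have hyx : y ≠ x := fun h => by rw [h, hBxx] at hneg; exact absurd hneg (lt_irrefl 0)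
      exact ⟨Or.inr ⟨hyC, hyx⟩, by rw [h1 y hyC]; omega⟩
  have hmv2 : S1.mutVar x' = x := by
    have e1 : ∏ᶠ y ∈ {y | y ∈ S1.cluster ∧ 0 < S1.B x' y}, y ^ (S1.B x' y).toNat = N := by
      rw [hNdef]
      refine finprod_mem_congr hPos1 (fun y hy => ?_)
      rw [hNegDef] at hy
      rw [h1 y hy.1]
    have e2 : ∏ᶠ y ∈ {y | y ∈ S1.cluster ∧ S1.B x' y < 0}, y ^ (-S1.B x' y).toNat = M := by
      rw [hMdef]
      refine finprod_mem_congr hNeg1 (fun y hy => ?_)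
      rw [hPosDef] at hy
      rw [h1 y hy.1, neg_neg]
    have hstep : S1.mutVar x' = (N + M) / x' := by
      show ((∏ᶠ y ∈ {y | y ∈ S1.cluster ∧ 0 < S1.B x' y}, y ^ (S1.B x' y).toNat) +
          ∏ᶠ y ∈ {y | y ∈ S1.cluster ∧ S1.B x' y < 0}, y ^ (-S1.B x' y).toNat) / x' =
        (N + M) / x'
      rw [e1, e2]
    rw [hstep, hmv, add_comm N M]
    field_simp
  refine ⟨?_, ?_, ?_⟩
  · -- clusters agree
    show insert (S1.mutVar x') (S1.cluster \ {x'}) = S.cluster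
    rw [hmv2, hS1cluster,
      Set.insert_diff_self_of_notMem (fun h => hx'C h.1),
      Set.insert_diff_singleton, Set.insert_eq_self.mpr hxC]
  · -- exchangeables agree
    show insert (S1.mutVar x') (S1.ex \ {x'}) = S.ex
    have hS1ex : S1.ex = insert x' (S.ex \ {x}) := rfl
    have hx'ex : x' ∉ S.ex := fun h => hx'C (S.ex_subset h)
    rw [hmv2, hS1ex,
      Set.insert_diff_self_of_notMem (fun h => hx'ex h.1),
      Set.insert_diff_singleton, Set.insert_eq_self.mpr hx]
  · -- matrices agree on the cluster
    intro y hy z hz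
    have hclus : (S1.mutate x').cluster = S.cluster := by
      show insert (S1.mutVar x') (S1.cluster \ {x'}) = S.cluster
      rw [hmv2, hS1cluster,
        Set.insert_diff_self_of_notMem (fun h => hx'C h.1),
        Set.insert_diff_singleton, Set.insert_eq_self.mpr hxC]
    rw [hclus] at hy hz
    have hS2B : (S1.mutate x').B y z =
        mutB S1.B x' (if y = S1.mutVar x' then x' else y)
          (if z = S1.mutVar x' then x' else z) := rfl
    rw [hS2B, hmv2]
    by_cases hyx : y = x <;> by_cases hzx : z = x
    · subst hyx; subst hzx
      simp [mutB, h4, hBxx]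
    · subst hyx
      simp [mutB, hzx, h1 z hz]
    · subst hzx
      simp [mutB, hyx, h2 y hy]
    · have hy' : y ≠ x' := fun h => hx'C (h ▸ hy)
      have hz' : z ≠ x' := fun h => hx'C (h ▸ hz)
      rw [if_neg hyx, if_neg hzx]
      simp only [mutB]
      rw [if_neg (by simp [hy', hz'])]
      rw [h3 y hy z hz hyx hzx, h2 y hy, h1 z hz, abs_neg, abs_neg]
      have harw : |S.B y x| * -S.B x z + -S.B y x * |S.B x z| =
          -(|S.B y x| * S.B x z + S.B y x * |S.B x z|) := by ring
      rw [harw]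
      linarith [half_cancel_aux (S.B y x) (S.B x z)]
end
end

section
/- The composition of two rooted cluster morphisms is a rooted cluster morphism. In particular, if f : A(Σ₁) → A(Σ₂) and g : A(Σ₂) → A(Σ₃) are ring homomorphisms between rooted cluster algebras satisfying conditions (CM1), (CM2), (CM3), then g∘f also satisfies (CM1), (CM2), (CM3). -/
open scoped BigOperators
open scoped Classical

noncomputable section

universe u v w x₀

/-! ### Auxiliary development for the composition theorem -/

section AuxRCM

open Polynomial

universe u' v' w'

variable {K : Type u'} {L : Type v'} {M : Type w'} [Field K] [Field L] [Field M]

lemma indep_ne_zero {s : Set K}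
    (hs : AlgebraicIndependent ℤ ((↑) : s → K)) {y : K} (hy : y ∈ s) : y ≠ 0 := by
  intro h
  have ht := hs.transcendental ⟨y, hy⟩
  simp only [h] at ht
  exact ht isAlgebraic_zero

lemma indep_intCast_not_mem {s : Set K}
    (hs : AlgebraicIndependent ℤ ((↑) : s → K)) (n : ℤ) : ((n : ℤ) : K) ∉ s := by
  intro h
  have ht := hs.transcendental ⟨_, h⟩
  apply ht
  have h2 : IsAlgebraic ℤ (algebraMap ℤ K n) := isAlgebraic_algebraMap n
  rwa [algebraMap_int_eq, eq_intCast] at h2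

lemma algIndep_insert_iff {s : Set K} {a : K}
    (hs : AlgebraicIndependent ℤ ((↑) : s → K)) (ha : a ∉ s) :
    AlgebraicIndependent ℤ ((↑) : ↥(insert a s) → K) ↔
      Transcendental (Algebra.adjoin ℤ s) a := by
  have key : ((↑) : ↥(insert a s) → K)
      = (fun o : Option s => o.elim a (↑)) ∘ (Set.subtypeInsertEquivOption ha) := by
    funext x
    by_cases h : (x : K) = a <;> simp [h, Set.subtypeInsertEquivOption]
  have hrange : Set.range ((↑) : s → K) = s := Subtype.range_coe
  have iff1 : AlgebraicIndependent ℤ ((↑) : ↥(insert a s) → K) ↔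
      AlgebraicIndependent ℤ (fun o : Option s => o.elim a (↑)) := by
    constructor
    · intro h
      have h2 := h.comp (Set.subtypeInsertEquivOption ha).symm (Equiv.injective _)
      rwa [key, Function.comp_assoc, Equiv.self_comp_symm, Function.comp_id] at h2
    · intro h
      rw [key]
      exact h.comp _ (Equiv.injective _)
  rw [iff1, hs.option_iff_transcendental a, hrange]

lemma finprod_decomp (x : K) (t : Set K) (e : K → ℕ) :
    ∃ (a : ℕ) (u : Finset K), ↑u ⊆ t \ {x} ∧
      (∏ᶠ y ∈ t, y ^ e y) = x ^ a * ∏ y ∈ u, y ^ e y ∧ (x ∉ t → a = 0) := by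
  set f : K → K := fun y => y ^ e y with hf
  by_cases hfin : (t ∩ Function.mulSupport f).Finite
  · rw [finprod_mem_eq_prod f hfin]
    by_cases hx : x ∈ hfin.toFinset
    · refine ⟨e x, hfin.toFinset.erase x, ?_, ?_, ?_⟩
      · intro y hy
        simp only [Finset.coe_erase, Set.mem_diff, Set.mem_singleton_iff] at hy ⊢
        rcases hy with ⟨hy1, hy2⟩
        exact ⟨(hfin.mem_toFinset.mp hy1).1, hy2⟩
      · rw [← Finset.mul_prod_erase _ f hx]
      · intro hxt
        exact absurd (hfin.mem_toFinset.mp hx).1 hxt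
    · refine ⟨0, hfin.toFinset, ?_, by simp, fun _ => rfl⟩
      intro y hy
      have hy' := hfin.mem_toFinset.mp hy
      refine ⟨hy'.1, ?_⟩
      intro hyx
      rw [hyx] at hy
      exact hx hy
  · rw [finprod_mem_eq_one_of_infinite hfin]
    exact ⟨0, ∅, by simp, by simp, fun _ => rfl⟩

set_option synthInstance.maxHeartbeats 400000 in
lemma core_trans (R : Subalgebra ℤ K) {x : K}
    (hx : Transcendental R x) {f : Polynomial R}
    (hf0 : ((f.coeff 0 : R) : K) ≠ 0) :
    Transcendental R (Polynomial.aeval x f / x) := by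
  have hx0 : x ≠ 0 := by
    rintro rfl
    exact hx ⟨Polynomial.X, Polynomial.X_ne_zero, by simp⟩
  rintro ⟨p, hp, hpe⟩
  have hAM : ∀ r : R, algebraMap R K r = (r : K) := fun r => rfl
  set d := p.natDegree with hd
  set F : K := Polynomial.aeval x f with hF
  set q : Polynomial R := ∑ i ∈ Finset.range (d + 1),
    Polynomial.C (p.coeff i) * f ^ i * Polynomial.X ^ (d - i) with hq
  have hqx : Polynomial.aeval x q = 0 := by
    have h1 : Polynomial.aeval x q
        = ∑ i ∈ Finset.range (d + 1), ((p.coeff i : K) * F ^ i * x ^ (d - i)) := by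
      rw [hq, map_sum]
      refine Finset.sum_congr rfl fun i hi => ?_
      simp [hF, Polynomial.aeval_C, hAM]
    have h2 : Polynomial.aeval (F / x) p
        = ∑ i ∈ Finset.range (d + 1), (p.coeff i : K) • (F / x) ^ i :=
      Polynomial.aeval_eq_sum_range _
    rw [h1]
    have h3 : ∀ i ∈ Finset.range (d + 1),
        (p.coeff i : K) * F ^ i * x ^ (d - i) = x ^ d * ((p.coeff i : K) * (F / x) ^ i) := by
      intro i hi
      have hid : i ≤ d := by
        have := Finset.mem_range.mp hi; omega
      have hxp : x ^ (d - i) * x ^ i = x ^ d := by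
        rw [← pow_add]; congr 1; omega
      field_simp [div_pow]
      have hxi : x ^ i * x⁻¹ ^ i = 1 := by rw [← mul_pow, mul_inv_cancel₀ hx0, one_pow]
      linear_combination (-((p.coeff i : K) * F ^ i * x ^ (d - i))) * hxi
        + ((p.coeff i : K) * F ^ i * x⁻¹ ^ i) * hxp
    rw [Finset.sum_congr rfl h3, ← Finset.mul_sum]
    have : ∑ i ∈ Finset.range (d + 1), (p.coeff i : K) * (F / x) ^ i = 0 := by
      rw [← hpe, h2]
      refine Finset.sum_congr rfl fun i _ => ?_
      rw [Algebra.smul_def]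
      rfl
    rw [this, mul_zero]
  have hq0 : q = 0 := transcendental_iff.mp hx q hqx
  have h0 : Polynomial.aeval (0 : K) q = 0 := by rw [hq0]; simp
  have hcol : Polynomial.aeval (0 : K) q
      = (p.coeff d : K) * ((f.coeff 0 : R) : K) ^ d := by
    rw [hq, map_sum]
    rw [Finset.sum_eq_single d]
    · simp [Polynomial.aeval_C, hAM]
      have : Polynomial.aeval (0 : K) f = ((f.coeff 0 : R) : K) := by
        rw [Polynomial.aeval_def, Polynomial.eval₂_at_zero]
        rfl
      simp [this]
    · intro i hi hne
      have hid : i ≤ d := by have := Finset.mem_range.mp hi; omega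
      have : (0 : K) ^ (d - i) = 0 := by
        apply zero_pow
        omega
      simp [this]
    · intro h
      exact absurd (Finset.self_mem_range_succ d) h
  rw [h0] at hcol
  have hld : (p.coeff d : K) = 0 := by
    rcases mul_eq_zero.mp hcol.symm with h | h
    · exact h
    · exact absurd (pow_eq_zero_iff' .. |>.mp h).1 hf0
  have : p.coeff d = 0 := by
    exact_mod_cast hld
  exact hp (Polynomial.leadingCoeff_eq_zero.mp this)

set_option synthInstance.maxHeartbeats 400000 in
lemma sum_prod_ne_zero_aux {s : Set K}
    (hs : AlgebraicIndependent ℤ ((↑) : s → K)) (u v : Finset K)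
    (hu : ↑u ⊆ s) (hv : ↑v ⊆ s) (huv : ∀ y ∈ u, y ∉ v) (e e' : K → ℕ)
    (he : ∀ y ∈ u, 1 ≤ e y) {z : K} (hz : z ∈ u) :
    (∏ y ∈ u, y ^ e y) + (∏ y ∈ v, y ^ e' y) ≠ 0 := by
  intro hsum
  have hzs : z ∈ s := hu hz
  have hzns : z ∉ s \ {z} := fun h => h.2 rfl
  have hins : insert z (s \ {z}) = s := by
    rw [Set.insert_diff_singleton, Set.insert_eq_self.mpr hzs]
  have hs' : AlgebraicIndependent ℤ ((↑) : ↥(s \ {z}) → K) :=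
    hs.mono Set.diff_subset
  have htz : Transcendental (Algebra.adjoin ℤ (s \ {z})) z := by
    have h2 : AlgebraicIndependent ℤ ((↑) : ↥(insert z (s \ {z})) → K) :=
      hs.mono (by rw [hins])
    exact (algIndep_insert_iff hs' hzns).mp h2
  set R := Algebra.adjoin ℤ (s \ {z}) with hR
  have hvs : ↑v ⊆ s \ {z} := by
    intro y hy
    exact ⟨hv hy, fun h => huv z hz (h ▸ hy)⟩
  have hus : ↑(u.erase z) ⊆ s \ {z} := by
    intro y hy
    simp only [Finset.coe_erase, Set.mem_diff, Set.mem_singleton_iff] at hy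
    exact ⟨hu hy.1, hy.2⟩
  set A₁ : K := ∏ y ∈ u.erase z, y ^ e y with hA₁def
  set B₀ : K := ∏ y ∈ v, y ^ e' y with hB₀def
  have hA₁ : A₁ ∈ R := Subalgebra.prod_mem _ fun y hy =>
    pow_mem (Algebra.subset_adjoin (hus hy)) _
  have hB₀ : B₀ ∈ R := Subalgebra.prod_mem _ fun y hy =>
    pow_mem (Algebra.subset_adjoin (hvs hy)) _
  have hB₀0 : B₀ ≠ 0 := Finset.prod_ne_zero_iff.mpr fun y hy =>
    pow_ne_zero _ (indep_ne_zero hs (hv hy))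
  have hsplit : (∏ y ∈ u, y ^ e y) = z ^ e z * A₁ := (Finset.mul_prod_erase u _ hz).symm
  set P : Polynomial R := Polynomial.C ⟨A₁, hA₁⟩ * Polynomial.X ^ (e z)
    + Polynomial.C ⟨B₀, hB₀⟩ with hP
  have hAM : ∀ r : R, algebraMap R K r = (r : K) := fun r => rfl
  have hPz : Polynomial.aeval z P = 0 := by
    have hcalc : Polynomial.aeval z P = A₁ * z ^ e z + B₀ := by
      simp [hP, hAM]
    rw [hcalc]
    rw [hsplit, mul_comm] at hsum
    exact hsum
  have hP0 : P ≠ 0 := by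
    intro h
    have hc : P.coeff 0 = ⟨B₀, hB₀⟩ := by
      have hne : ¬((0 : ℕ) = e z) := by have := he z hz; omega
      simp [hP, Polynomial.coeff_X_pow, hne]
    rw [h] at hc
    have : B₀ = 0 := by
      have := congrArg (Subtype.val) hc
      simpa using this.symm
    exact hB₀0 this
  exact htz ⟨P, hP0, hPz⟩

lemma sum_prod_ne_zero {s : Set K}
    (hs : AlgebraicIndependent ℤ ((↑) : s → K)) (u v : Finset K)
    (hu : ↑u ⊆ s) (hv : ↑v ⊆ s) (huv : ∀ y ∈ u, y ∉ v) (e e' : K → ℕ)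
    (he : ∀ y ∈ u, 1 ≤ e y) (he' : ∀ y ∈ v, 1 ≤ e' y) :
    (∏ y ∈ u, y ^ e y) + (∏ y ∈ v, y ^ e' y) ≠ 0 := by
  rcases u.eq_empty_or_nonempty with hu0 | ⟨z, hz⟩
  · rcases v.eq_empty_or_nonempty with hv0 | ⟨z, hz⟩
    · subst hu0; subst hv0
      have : CharZero K := charZero_of_injective_algebraMap hs.algebraMap_injective
      simp only [Finset.prod_empty]
      norm_num
    · rw [add_comm]
      exact sum_prod_ne_zero_aux hs v u hv hu (fun y hy h => huv _ h hy) e' e he' hz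
  · exact sum_prod_ne_zero_aux hs u v hu hv huv e e' he hz

/-- The cluster of a seed is algebraically independent. -/
def GoodC (S : Seed K) : Prop := AlgebraicIndependent ℤ ((↑) : S.cluster → K)

set_option synthInstance.maxHeartbeats 400000 in
lemma GoodC.mutate {S : Seed K} (hS : GoodC S) {x : K} (hx : x ∈ S.cluster) :
    GoodC (S.mutate x) := by
  classical
  set s : Set K := S.cluster \ {x} with hs_def
  have hs : AlgebraicIndependent ℤ ((↑) : s → K) := hS.mono Set.diff_subset
  have hxns : x ∉ s := fun h => h.2 rfl
  have hins : insert x s = S.cluster := by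
    rw [hs_def, Set.insert_diff_singleton, Set.insert_eq_self.mpr hx]
  have htx : Transcendental (Algebra.adjoin ℤ s) x :=
    (algIndep_insert_iff hs hxns).mp (hS.mono (by rw [hins]))
  set ep : K → ℕ := fun y => (S.B x y).toNat with hep
  set em : K → ℕ := fun y => (-S.B x y).toNat with hem
  set tp : Set K := {y | y ∈ S.cluster ∧ 0 < S.B x y} with htp
  set tm : Set K := {y | y ∈ S.cluster ∧ S.B x y < 0} with htm
  obtain ⟨a, u, hu, hAeq, hau⟩ := finprod_decomp x tp ep
  obtain ⟨b, v, hv, hBeq, hbv⟩ := finprod_decomp x tm em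
  have hu_s : ↑u ⊆ s := fun y hy => ⟨((hu hy).1 : y ∈ tp).1, (hu hy).2⟩
  have hv_s : ↑v ⊆ s := fun y hy => ⟨((hv hy).1 : y ∈ tm).1, (hv hy).2⟩
  have hab : a = 0 ∨ b = 0 := by
    by_cases hxt : x ∈ tp
    · right
      apply hbv
      intro hxt'
      have h1 : 0 < S.B x x := hxt.2
      have h2 : S.B x x < 0 := hxt'.2
      omega
    · left; exact hau hxt
  have huv : ∀ y ∈ u, y ∉ v := by
    intro y hy hy'
    have h1 : 0 < S.B x y := ((hu hy).1 : y ∈ tp).2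
    have h2 : S.B x y < 0 := ((hv hy').1 : y ∈ tm).2
    omega
  have heu : ∀ y ∈ u, 1 ≤ ep y := by
    intro y hy
    have h1 : 0 < S.B x y := ((hu hy).1 : y ∈ tp).2
    simp only [hep]
    omega
  have hev : ∀ y ∈ v, 1 ≤ em y := by
    intro y hy
    have h1 : S.B x y < 0 := ((hv hy).1 : y ∈ tm).2
    simp only [hem]
    omega
  set A₀ : K := ∏ y ∈ u, y ^ ep y with hA₀def
  set B₀ : K := ∏ y ∈ v, y ^ em y with hB₀def
  set R := Algebra.adjoin ℤ s with hRdef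
  have hA₀R : A₀ ∈ R := Subalgebra.prod_mem _ fun y hy =>
    pow_mem (Algebra.subset_adjoin (hu_s hy)) _
  have hB₀R : B₀ ∈ R := Subalgebra.prod_mem _ fun y hy =>
    pow_mem (Algebra.subset_adjoin (hv_s hy)) _
  have hA₀0 : A₀ ≠ 0 := Finset.prod_ne_zero_iff.mpr fun y hy =>
    pow_ne_zero _ (indep_ne_zero hs (hu_s hy))
  have hB₀0 : B₀ ≠ 0 := Finset.prod_ne_zero_iff.mpr fun y hy =>
    pow_ne_zero _ (indep_ne_zero hs (hv_s hy))
  have hAM : ∀ r : R, algebraMap R K r = (r : K) := fun r => rfl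
  set f : Polynomial R := Polynomial.C ⟨A₀, hA₀R⟩ * Polynomial.X ^ a
    + Polynomial.C ⟨B₀, hB₀R⟩ * Polynomial.X ^ b with hf
  have hfx : Polynomial.aeval x f
      = (∏ᶠ y ∈ tp, y ^ ep y) + (∏ᶠ y ∈ tm, y ^ em y) := by
    have : Polynomial.aeval x f = A₀ * x ^ a + B₀ * x ^ b := by
      simp [hf, hAM]
    rw [this, hAeq, hBeq]
    ring
  have hf0 : ((f.coeff 0 : R) : K) ≠ 0 := by
    have hcoeff : f.coeff 0 = (if 0 = a then (⟨A₀, hA₀R⟩ : R) else 0)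
        + (if 0 = b then (⟨B₀, hB₀R⟩ : R) else 0) := by
      simp [hf, Polynomial.coeff_X_pow, mul_ite]
    rcases hab with ha0 | hb0
    · subst ha0
      by_cases hb : 0 = b
      · rw [hcoeff, if_pos rfl, if_pos hb]
        push_cast
        exact sum_prod_ne_zero hs u v hu_s hv_s huv ep em heu hev
      · rw [hcoeff, if_pos rfl, if_neg hb, add_zero]
        exact hA₀0
    · subst hb0
      by_cases ha : 0 = a
      · rw [hcoeff, if_pos ha, if_pos rfl]
        push_cast
        exact sum_prod_ne_zero hs u v hu_s hv_s huv ep em heu hev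
      · rw [hcoeff, if_neg ha, if_pos rfl, zero_add]
        exact hB₀0
  have hmv : S.mutVar x = Polynomial.aeval x f / x := by
    rw [Seed.mutVar, hfx]
  have htrans : Transcendental R (S.mutVar x) := by
    rw [hmv]
    exact core_trans R htx hf0
  have hne : S.mutVar x ∉ s := by
    intro hmem
    apply htrans
    have := isAlgebraic_algebraMap (R := R) (A := K) ⟨_, Algebra.subset_adjoin hmem⟩
    rwa [hAM] at this
  show AlgebraicIndependent ℤ ((↑) : ↥(insert (S.mutVar x) s) → K)
  exact (algIndep_insert_iff hs hne).mpr htrans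

lemma Seed.Admissible.good_mutateSeq :
    ∀ (p : List K) (S : Seed K), GoodC S → S.Admissible p → GoodC (S.mutateSeq p)
  | [], _, hS, _ => hS
  | y :: p, S, hS, hp =>
    Seed.Admissible.good_mutateSeq p _ (hS.mutate (S.ex_subset hp.1)) hp.2

lemma Seed.mutSeqMap_intCast :
    ∀ (p : List K) (S : Seed K), GoodC S → S.Admissible p → ∀ n : ℤ,
      S.mutSeqMap p ((n : ℤ) : K) = ((n : ℤ) : K)
  | [], _, _, _, _ => rfl
  | y :: p, S, hS, hp, n => by
    have hyc : y ∈ S.cluster := S.ex_subset hp.1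
    have hne : ((n : ℤ) : K) ≠ y := by
      intro h
      exact indep_intCast_not_mem hS n (h ▸ hyc)
    show (S.mutate y).mutSeqMap p (S.mutMap y ((n : ℤ) : K)) = _
    have hmm : S.mutMap y ((n : ℤ) : K) = ((n : ℤ) : K) := if_neg hne
    rw [hmm]
    exact Seed.mutSeqMap_intCast p _ (hS.mutate hyc) hp.2 n

lemma Seed.mutateSeq_append (S : Seed K) (p q : List K) :
    S.mutateSeq (p ++ q) = (S.mutateSeq p).mutateSeq q := by
  induction p generalizing S with
  | nil => rfl
  | cons y p ih => exact ih (S.mutate y)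

lemma Seed.mutSeqMap_append (S : Seed K) (p q : List K) (z : K) :
    S.mutSeqMap (p ++ q) z = (S.mutateSeq p).mutSeqMap q (S.mutSeqMap p z) := by
  induction p generalizing S z with
  | nil => rfl
  | cons y p ih => exact ih (S.mutate y) (S.mutMap y z)

lemma Seed.admissible_append (S : Seed K) (p q : List K) :
    S.Admissible (p ++ q) ↔ S.Admissible p ∧ (S.mutateSeq p).Admissible q := by
  induction p generalizing S with
  | nil => simp [Seed.Admissible, Seed.mutateSeq]
  | cons y p ih =>
    show (y ∈ S.ex ∧ (S.mutate y).Admissible (p ++ q)) ↔ _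
    rw [ih (S.mutate y)]
    constructor
    · rintro ⟨h1, h2, h3⟩
      exact ⟨⟨h1, h2⟩, h3⟩
    · rintro ⟨⟨h1, h2⟩, h3⟩
      exact ⟨h1, h2, h3⟩

lemma image_ite {x v : K} {s : Set K} (hx : x ∈ s) :
    (fun y => if y = x then v else y) '' s = insert v (s \ {x}) := by
  ext z
  constructor
  · rintro ⟨u, hu, rfl⟩
    dsimp only
    by_cases h : u = x
    · simp [h]
    · rw [if_neg h]
      exact Or.inr ⟨hu, h⟩
  · rintro (rfl | ⟨hz, hzx⟩)
    · exact ⟨x, hx, by simp⟩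
    · exact ⟨z, hz, if_neg (by simpa using hzx)⟩

lemma Seed.ex_mutateSeq :
    ∀ (p : List K) (S : Seed K), S.Admissible p →
      (S.mutateSeq p).ex = S.mutSeqMap p '' S.ex
  | [], S, _ => by simp [Seed.mutateSeq, Seed.mutSeqMap]
  | y :: p, S, hp => by
    have h1 : (S.mutate y).ex = S.mutMap y '' S.ex := (image_ite hp.1).symm
    show ((S.mutate y).mutateSeq p).ex = _
    rw [Seed.ex_mutateSeq p _ hp.2, h1, ← Set.image_comp]
    rfl

lemma mapFn_intCast {S : Seed L} {T : Seed M} (g : S.algebra →+* T.algebra) (n : ℤ) :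
    mapFn S g ((n : ℤ) : L) = ((n : ℤ) : M) := by
  have h : ((n : ℤ) : L) ∈ S.algebra := intCast_mem _ n
  rw [mapFn, dif_pos h]
  have h2 : (⟨((n : ℤ) : L), h⟩ : S.algebra) = (n : S.algebra) := by
    ext
    simp
  rw [h2, map_intCast]
  simp

lemma mapFn_comp {S₁ : Seed K} {S₂ : Seed L} {S₃ : Seed M}
    (f : S₁.algebra →+* S₂.algebra) (g : S₂.algebra →+* S₃.algebra) (a : K) :
    mapFn S₁ (g.comp f) a = mapFn S₂ g (mapFn S₁ f a) := by
  by_cases h : a ∈ S₁.algebra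
  · rw [mapFn, dif_pos h, mapFn, mapFn, dif_pos h]
    have h2 : ((f ⟨a, h⟩ : S₂.algebra) : L) ∈ S₂.algebra := (f ⟨a, h⟩).2
    rw [dif_pos h2]
    simp [RingHom.comp_apply]
  · rw [mapFn, dif_neg h, mapFn, mapFn, dif_neg h, dif_pos (zero_mem _)]
    have h3 : (⟨(0 : L), zero_mem _⟩ : S₂.algebra) = 0 := rfl
    rw [h3, map_zero]
    simp

set_option maxHeartbeats 800000 in
lemma adm_map {S₁ : Seed K} {S₂ : Seed L} {S₃ : Seed M}
    (good₂ : GoodC S₂) (good₃ : GoodC S₃)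
    (f : S₁.algebra →+* S₂.algebra) (g : S₂.algebra →+* S₃.algebra)
    (hf : IsRCM S₁ S₂ f) (l : List K) (h1 : S₁.Admissible l)
    (h3 : S₃.Admissible (l.map (fun a => mapFn S₂ g (mapFn S₁ f a)))) :
    S₂.Admissible (l.map (mapFn S₁ f)) := by
  induction l using List.reverseRecOn with
  | nil => trivial
  | append_singleton p y IH =>
    rw [List.map_append] at h3 ⊢
    rw [Seed.admissible_append] at h1 h3 ⊢
    have hy1 : y ∈ (S₁.mutateSeq p).ex := h1.2.1
    have hp3 : S₃.Admissible (p.map (fun a => mapFn S₂ g (mapFn S₁ f a))) := h3.1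
    have hy3 : mapFn S₂ g (mapFn S₁ f y)
        ∈ (S₃.mutateSeq (p.map (fun a => mapFn S₂ g (mapFn S₁ f a)))).ex := by
      simpa using h3.2.1
    have IH2 : S₂.Admissible (p.map (mapFn S₁ f)) := IH h1.1 hp3
    refine ⟨IH2, ?_, trivial⟩
    rw [Seed.ex_mutateSeq p S₁ h1.1] at hy1
    obtain ⟨u, hu, rfl⟩ := hy1
    have e1 : mapFn S₁ f (S₁.mutSeqMap p u)
        = S₂.mutSeqMap (p.map (mapFn S₁ f)) (mapFn S₁ f u) :=
      hf.cm3 p ⟨h1.1, IH2⟩ u (S₁.ex_subset hu)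
    rcases hf.cm2 u hu with h' | ⟨n, hn⟩
    · rw [Seed.ex_mutateSeq _ S₂ IH2]
      exact ⟨mapFn S₁ f u, h', e1.symm⟩
    · exfalso
      have e2 : mapFn S₁ f (S₁.mutSeqMap p u) = ((n : ℤ) : L) := by
        rw [e1, ← hn, Seed.mutSeqMap_intCast _ S₂ good₂ IH2]
      have e3 : mapFn S₂ g (mapFn S₁ f (S₁.mutSeqMap p u)) = ((n : ℤ) : M) := by
        rw [e2, mapFn_intCast]
      rw [e3] at hy3
      have hgood : GoodC (S₃.mutateSeq (p.map (fun a => mapFn S₂ g (mapFn S₁ f a)))) :=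
        Seed.Admissible.good_mutateSeq _ S₃ good₃ hp3
      exact indep_intCast_not_mem hgood n ((S₃.mutateSeq _).ex_subset hy3)

end AuxRCM

/-- the composition of rooted cluster morphisms is a rooted cluster
morphism. -/
theorem isRCM_comp {K : Type u} {L : Type v} {M : Type w} [Field K] [Field L] [Field M]
    (S₁ : Seed K) (S₂ : Seed L) (S₃ : Seed M)
    (h₁ : IsSeed S₁) (h₂ : IsSeed S₂) (h₃ : IsSeed S₃)
    (f : S₁.algebra →+* S₂.algebra) (g : S₂.algebra →+* S₃.algebra)
    (hf : IsRCM S₁ S₂ f) (hg : IsRCM S₂ S₃ g) :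
    IsRCM S₁ S₃ (g.comp f) := by
  have hH : mapFn S₁ (g.comp f) = fun a => mapFn S₂ g (mapFn S₁ f a) :=
    funext (mapFn_comp f g)
  constructor
  · intro y hy
    rw [hH]
    rcases hf.cm1 y hy with hc | ⟨n, hn⟩
    · rcases hg.cm1 _ hc with hc' | ⟨n, hn⟩
      · exact Or.inl hc'
      · exact Or.inr ⟨n, hn⟩
    · refine Or.inr ⟨n, ?_⟩
      show (↑n : M) = mapFn S₂ g (mapFn S₁ f y)
      rw [← hn, mapFn_intCast]
  · intro y hy
    rw [hH]
    rcases hf.cm2 y hy with hc | ⟨n, hn⟩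
    · rcases hg.cm2 _ hc with hc' | ⟨n, hn⟩
      · exact Or.inl hc'
      · exact Or.inr ⟨n, hn⟩
    · refine Or.inr ⟨n, ?_⟩
      show (↑n : M) = mapFn S₂ g (mapFn S₁ f y)
      rw [← hn, mapFn_intCast]
  · intro l hbi y hy
    rw [hH] at hbi ⊢
    obtain ⟨h1, h3⟩ := hbi
    have h2 : S₂.Admissible (l.map (mapFn S₁ f)) := adm_map h₂.free h₃.free f g hf l h1 h3
    have h3' : S₃.Admissible ((l.map (mapFn S₁ f)).map (mapFn S₂ g)) := by
      rw [List.map_map]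
      simpa [Function.comp_def] using h3
    have e1 : mapFn S₁ f (S₁.mutSeqMap l y)
        = S₂.mutSeqMap (l.map (mapFn S₁ f)) (mapFn S₁ f y) :=
      hf.cm3 l ⟨h1, h2⟩ y hy
    show mapFn S₂ g (mapFn S₁ f (S₁.mutSeqMap l y))
        = S₃.mutSeqMap (List.map (fun a => mapFn S₂ g (mapFn S₁ f a)) l)
            (mapFn S₂ g (mapFn S₁ f y))
    rw [e1]
    rcases hf.cm1 y hy with hc | ⟨n, hn⟩
    · have e2 := hg.cm3 (l.map (mapFn S₁ f)) ⟨h2, h3'⟩ (mapFn S₁ f y) hc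
      rw [e2, List.map_map]
      simp [Function.comp_def]
    · rw [← hn, Seed.mutSeqMap_intCast _ S₂ h₂.free h2 n, mapFn_intCast,
        Seed.mutSeqMap_intCast _ S₃ h₃.free (by simpa [Function.comp_def] using h3) n]
end
end

section
/- Monomorphisms in the category Clus of rooted cluster algebras coincide with the injective rooted cluster morphisms: a rooted cluster morphism f is a monomorphism if and only if f is injective. -/
open scoped BigOperators
open scoped Classical

noncomputable section

universe u v w x₀

namespace MonoAux
universe w₁

theorem aeval_int_eq {A : Type*} [CommRing A] [Algebra ℤ A] (x : A) (p : Polynomial ℤ) :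
    Polynomial.aeval x p = Polynomial.eval₂ (Int.castRingHom A) x p := by
  rw [Polynomial.aeval_def]; congr 1; exact RingHom.ext_int _ _

theorem hom_eval₂_int {A B : Type*} [CommRing A] [CommRing B] (φ : A →+* B) (x : A)
    (p : Polynomial ℤ) :
    φ (Polynomial.eval₂ (Int.castRingHom A) x p) = Polynomial.eval₂ (Int.castRingHom B) (φ x) p := by
  rw [Polynomial.hom_eval₂]; congr 1; exact RingHom.ext_int _ _

theorem maeval_int_eq {σ A : Type*} [CommRing A] [Algebra ℤ A] (x : σ → A) (p : MvPolynomial σ ℤ) :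
    MvPolynomial.aeval x p = MvPolynomial.eval₂ (Int.castRingHom A) x p := by
  rw [MvPolynomial.aeval_def]; congr 1; exact RingHom.ext_int _ _

theorem hom_meval₂_int {σ A B : Type*} [CommRing A] [CommRing B] (φ : A →+* B) (x : σ → A)
    (p : MvPolynomial σ ℤ) :
    φ (MvPolynomial.eval₂ (Int.castRingHom A) x p)
      = MvPolynomial.eval₂ (Int.castRingHom B) (fun i => φ (x i)) p := by
  rw [MvPolynomial.eval₂_comp_left]; congr 1; exact RingHom.ext_int _ _

abbrev ThF : Type w₁ := ULift.{w₁} (FractionRing (Polynomial ℤ))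

def tv : ThF.{w₁} := ULift.up (algebraMap (Polynomial ℤ) (FractionRing (Polynomial ℤ)) Polynomial.X)

theorem eval₂_tv (p : Polynomial ℤ) :
    (ULift.ringEquiv : ThF.{w₁} ≃+* (FractionRing (Polynomial ℤ)))
        (Polynomial.eval₂ (Int.castRingHom ThF.{w₁}) tv p)
      = algebraMap (Polynomial ℤ) (FractionRing (Polynomial ℤ)) p := by
  rw [show ((ULift.ringEquiv : ThF.{w₁} ≃+* (FractionRing (Polynomial ℤ)))
        (Polynomial.eval₂ (Int.castRingHom ThF.{w₁}) tv p))
      = (ULift.ringEquiv : ThF.{w₁} ≃+* (FractionRing (Polynomial ℤ))).toRingHom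
        (Polynomial.eval₂ (Int.castRingHom ThF.{w₁}) tv p) from rfl, hom_eval₂_int]
  have h2 : (ULift.ringEquiv : ThF.{w₁} ≃+* (FractionRing (Polynomial ℤ))).toRingHom tv
      = algebraMap (Polynomial ℤ) (FractionRing (Polynomial ℤ)) Polynomial.X := rfl
  rw [h2, ← hom_eval₂_int (algebraMap (Polynomial ℤ) (FractionRing (Polynomial ℤ))) Polynomial.X p,
    ← aeval_int_eq, Polynomial.aeval_X_left_apply]

theorem eval₂_tv_inj :
    Function.Injective (Polynomial.eval₂ (Int.castRingHom ThF.{w₁}) (tv : ThF.{w₁})) := by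
  intro p q h
  have := congrArg (ULift.ringEquiv : ThF.{w₁} ≃+* _) h
  rw [eval₂_tv, eval₂_tv] at this
  exact IsFractionRing.injective (Polynomial ℤ) (FractionRing (Polynomial ℤ)) this

theorem trans_tv : Transcendental ℤ (tv : ThF.{w₁}) := by
  rw [transcendental_iff_injective]
  intro p q h
  rw [aeval_int_eq, aeval_int_eq] at h
  exact eval₂_tv_inj h
-- ambient: Subfield.closure {tv} = ⊤
theorem closure_t0 : Subfield.closure
    ({algebraMap (Polynomial ℤ) (FractionRing (Polynomial ℤ)) Polynomial.X} :
      Set (FractionRing (Polynomial ℤ))) = ⊤ := by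
  rw [eq_top_iff]
  intro z _
  obtain ⟨p, q, -, rfl⟩ := IsFractionRing.div_surjective (A := Polynomial ℤ) z
  have key : ∀ r : Polynomial ℤ, algebraMap (Polynomial ℤ) (FractionRing (Polynomial ℤ)) r ∈
      Subfield.closure ({algebraMap (Polynomial ℤ) (FractionRing (Polynomial ℤ)) Polynomial.X} :
        Set (FractionRing (Polynomial ℤ))) := by
    intro r
    induction r using Polynomial.induction_on with
    | C a =>
        have : (Polynomial.C a : Polynomial ℤ) = (a : Polynomial ℤ) := by
          simp
        rw [this, map_intCast]
        exact intCast_mem _ a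
    | add p q hp hq => rw [map_add]; exact add_mem hp hq
    | monomial n a hp =>
        rw [pow_succ, ← mul_assoc, map_mul]
        exact mul_mem hp (Subfield.subset_closure rfl)
  exact div_mem (key p) (key q)
def ThSeed : Seed ThF.{w₁} :=
  ⟨{tv}, ∅, Set.empty_subset _, fun _ _ => 0⟩

theorem thseed_ambient : Subfield.closure (ThSeed.{w₁}.cluster) = ⊤ := by
  rw [eq_top_iff]
  intro z _
  have hz : (ULift.ringEquiv : ThF.{w₁} ≃+* (FractionRing (Polynomial ℤ))) z ∈
      Subfield.closure ({algebraMap (Polynomial ℤ) (FractionRing (Polynomial ℤ)) Polynomial.X} :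
        Set (FractionRing (Polynomial ℤ))) := by
    rw [closure_t0]; trivial
  have hle : Subfield.closure ({algebraMap (Polynomial ℤ) (FractionRing (Polynomial ℤ))
      Polynomial.X} : Set (FractionRing (Polynomial ℤ))) ≤
      (Subfield.closure (ThSeed.{w₁}.cluster)).comap
        (ULift.ringEquiv : ThF.{w₁} ≃+* (FractionRing (Polynomial ℤ))).symm.toRingHom := by
    apply Subfield.closure_le.mpr
    intro x hx
    rcases hx with rfl
    exact Subfield.subset_closure rfl
  have := hle hz
  simpa using this

theorem thseed_isSeed : IsSeed (ThSeed.{w₁}) where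
  countable := Set.countable_singleton _
  free := by
    have key : @AlgebraicIndependent (↥(ThSeed.{w₁}.cluster)) ℤ ThF.{w₁} ((↑) : (ThSeed.{w₁}.cluster) → ThF.{w₁}) _ _ ULift.algebra := by
      letI : Unique (↥(ThSeed.{w₁}.cluster)) := Set.uniqueSingleton tv
      rw [algebraicIndependent_unique_type_iff]
      have hd : ((default : ↥(ThSeed.{w₁}.cluster)) : ThF.{w₁}) = tv := rfl
      rw [hd]
      intro halg
      apply trans_tv.{w₁}
      obtain ⟨p, hp0, hp⟩ := halg
      refine ⟨p, hp0, ?_⟩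
      rw [aeval_int_eq] at hp ⊢
      exact hp
    have e : (ULift.algebra : Algebra ℤ ThF.{w₁}) = Ring.toIntAlgebra ThF.{w₁} :=
      Subsingleton.elim _ _
    exact e ▸ key
  ambient := thseed_ambient
  locFin := by
    intro y _
    constructor <;>
    · apply Set.Finite.subset (Set.finite_empty)
      intro z hz
      exact absurd rfl hz.2
  skew := by
    refine ⟨fun _ => 1, fun y _ => one_pos, fun y _ z _ => by simp [ThSeed]⟩

theorem thseed_clusterVars : ThSeed.{w₁}.clusterVars = {tv} := by
  ext z
  constructor
  · intro hz
    obtain ⟨l, hl⟩ := Set.mem_iUnion.mp hz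
    obtain ⟨adm, hmem⟩ := Set.mem_iUnion.mp hl
    cases l with
    | nil => exact hmem
    | cons y l' => exact absurd adm.1 (Set.notMem_empty y)
  · intro hz
    exact Set.mem_iUnion.mpr ⟨[], Set.mem_iUnion.mpr ⟨trivial, hz⟩⟩

theorem thseed_algebra : ThSeed.{w₁}.algebra = Subring.closure {tv} := by
  rw [Seed.algebra, thseed_clusterVars]

theorem tv_mem : tv ∈ ThSeed.{w₁}.algebra := by
  rw [thseed_algebra]; exact Subring.subset_closure rfl

def psi : Polynomial ℤ →+* ↥(ThSeed.{w₁}.algebra) :=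
  Polynomial.eval₂RingHom (Int.castRingHom _) ⟨tv, tv_mem⟩

theorem psi_coe (p : Polynomial ℤ) :
    ((psi.{w₁} p : ↥(ThSeed.{w₁}.algebra)) : ThF.{w₁})
      = Polynomial.eval₂ (Int.castRingHom ThF.{w₁}) tv p := by
  have h := hom_eval₂_int (ThSeed.{w₁}.algebra).subtype
    (⟨tv, tv_mem⟩ : ↥(ThSeed.{w₁}.algebra)) p
  simp only [Subring.coe_subtype] at h
  rw [show psi.{w₁} p = Polynomial.eval₂ (Int.castRingHom ↥(ThSeed.{w₁}.algebra))
    (⟨tv, tv_mem⟩ : ↥(ThSeed.{w₁}.algebra)) p from rfl]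
  exact h

theorem psi_bij : Function.Bijective (psi.{w₁}) := by
  constructor
  · intro p q h
    apply eval₂_tv_inj.{w₁}
    rw [← psi_coe, ← psi_coe, h]
  · intro a
    have ha : (a : ThF.{w₁}) ∈ Subring.closure ({tv} : Set ThF.{w₁}) := by
      exact (SetLike.ext_iff.mp thseed_algebra _).mp a.2
    have key : ∀ z ∈ Subring.closure ({tv} : Set ThF.{w₁}),
        ∃ p : Polynomial ℤ, Polynomial.eval₂ (Int.castRingHom ThF.{w₁}) tv p = z := by
      intro z hz
      induction hz using Subring.closure_induction with
      | mem x hx => exact ⟨Polynomial.X, by rw [Polynomial.eval₂_X]; exact hx.symm⟩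
      | zero => exact ⟨0, by simp⟩
      | one => exact ⟨1, by simp⟩
      | add x y _ _ hx hy =>
          obtain ⟨p, hp⟩ := hx; obtain ⟨q, hq⟩ := hy
          exact ⟨p + q, by rw [Polynomial.eval₂_add, hp, hq]⟩
      | mul x y _ _ hx hy =>
          obtain ⟨p, hp⟩ := hx; obtain ⟨q, hq⟩ := hy
          exact ⟨p * q, by rw [Polynomial.eval₂_mul, hp, hq]⟩
      | neg x _ hx =>
          obtain ⟨p, hp⟩ := hx
          exact ⟨-p, by rw [Polynomial.eval₂_neg, hp]⟩
    obtain ⟨p, hp⟩ := key _ ha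
    exact ⟨p, Subtype.ext (by rw [psi_coe, hp])⟩

def E : Polynomial ℤ ≃+* ↥(ThSeed.{w₁}.algebra) := RingEquiv.ofBijective psi psi_bij

theorem E_X : E.{w₁} Polynomial.X = ⟨tv, tv_mem⟩ := by
  apply Subtype.ext
  show ((psi.{w₁} Polynomial.X : ↥(ThSeed.{w₁}.algebra)) : ThF.{w₁}) = tv
  rw [psi_coe, Polynomial.eval₂_X]

section Sep

universe u' v'
variable {K : Type u'} {L : Type v'} [Field K] [Field L]

def Gmap (S : Seed K) (u : K) (hu' : u ∈ S.algebra) :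
    ↥(ThSeed.{w₁}.algebra) →+* ↥(S.algebra) :=
  (Polynomial.eval₂RingHom (Int.castRingHom ↥(S.algebra)) ⟨u, hu'⟩).comp E.{w₁}.symm.toRingHom

theorem Gmap_tv (S : Seed K) (u : K) (hu' : u ∈ S.algebra) :
    mapFn ThSeed.{w₁} (Gmap.{w₁} S u hu') tv = u := by
  rw [mapFn, dif_pos tv_mem]
  have hE : E.{w₁}.symm ⟨tv, tv_mem⟩ = Polynomial.X := by
    rw [← E_X, RingEquiv.symm_apply_apply]
  show ((Gmap.{w₁} S u hu' ⟨tv, tv_mem⟩ : ↥(S.algebra)) : K) = u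
  rw [Gmap, RingHom.comp_apply]
  rw [show (E.{w₁}.symm.toRingHom ⟨tv, tv_mem⟩) = E.{w₁}.symm ⟨tv, tv_mem⟩ from rfl, hE]
  simp

theorem Gmap_rcm (S : Seed K) (u : K) (hu' : u ∈ S.algebra)
    (hu : u ∈ S.cluster ∪ Set.range ((↑) : ℤ → K)) :
    IsRCM ThSeed.{w₁} S (Gmap.{w₁} S u hu') where
  cm1 := by
    intro y hy
    rcases hy with rfl
    rw [Gmap_tv]
    exact hu
  cm2 := by
    intro y hy
    exact absurd hy (Set.notMem_empty y)
  cm3 := by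
    intro l hl y hy
    have hnil : l = [] := by
      cases l with
      | nil => rfl
      | cons a l' => exact absurd hl.1.1 (Set.notMem_empty a)
    subst hnil
    rfl

theorem key_sep (S : Seed K) (T : Seed L) (f : ↥(S.algebra) →+* ↥(T.algebra))
    (mono : ∀ (X : ClusObj.{w₁}), IsSeed X.seed →
        ∀ g h : ↥(X.seed.algebra) →+* ↥(S.algebra), IsRCM X.seed S g → IsRCM X.seed S h →
          f.comp g = f.comp h → g = h)
    {u v : K} (hu : u ∈ S.cluster ∪ Set.range ((↑) : ℤ → K))
    (hv : v ∈ S.cluster ∪ Set.range ((↑) : ℤ → K))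
    (hu' : u ∈ S.algebra) (hv' : v ∈ S.algebra)
    (hfe : f ⟨u, hu'⟩ = f ⟨v, hv'⟩) : u = v := by
  have h2 : f.comp (Polynomial.eval₂RingHom (Int.castRingHom ↥(S.algebra)) ⟨u, hu'⟩)
      = f.comp (Polynomial.eval₂RingHom (Int.castRingHom ↥(S.algebra)) ⟨v, hv'⟩) := by
    apply Polynomial.ringHom_ext
    · intro a
      simp only [RingHom.comp_apply, Polynomial.coe_eval₂RingHom, Polynomial.eval₂_C,
        Int.coe_castRingHom, map_intCast]
    · simp only [RingHom.comp_apply, Polynomial.coe_eval₂RingHom, Polynomial.eval₂_X]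
      exact hfe
  have hG : f.comp (Gmap.{w₁} S u hu') = f.comp (Gmap.{w₁} S v hv') := by
    rw [Gmap, Gmap, ← RingHom.comp_assoc, ← RingHom.comp_assoc, h2]
  have := mono ⟨ThF.{w₁}, ThSeed.{w₁}⟩ thseed_isSeed _ _
    (Gmap_rcm.{w₁} S u hu' hu) (Gmap_rcm.{w₁} S v hv' hv) hG
  calc u = mapFn ThSeed.{w₁} (Gmap.{w₁} S u hu') tv := (Gmap_tv S u hu').symm
    _ = mapFn ThSeed.{w₁} (Gmap.{w₁} S v hv') tv := by rw [this]
    _ = v := Gmap_tv S v hv'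

end Sep

section Main

universe u' v'
variable {K : Type u'} [Field K]

theorem cluster_subset_clusterVars (S : Seed K) : S.cluster ⊆ S.clusterVars := by
  intro z hz
  exact Set.mem_iUnion.mpr ⟨[], Set.mem_iUnion.mpr ⟨trivial, hz⟩⟩

theorem cluster_mem_algebra (S : Seed K) {z : K} (hz : z ∈ S.cluster) : z ∈ S.algebra :=
  Subring.subset_closure (cluster_subset_clusterVars S hz)

end Main

end MonoAux

universe y₀

/-- monomorphisms in `Clus` coincide with injective rooted cluster
morphisms. -/
theorem mono_iff_injective {K : Type u} {L : Type v} [Field K] [Field L]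
    (S : Seed K) (T : Seed L) (hS : IsSeed S) (hT : IsSeed T)
    (f : S.algebra →+* T.algebra) (hf : IsRCM S T f) :
    (∀ (X : ClusObj.{y₀}), IsSeed X.seed →
        ∀ g h : X.seed.algebra →+* S.algebra, IsRCM X.seed S g → IsRCM X.seed S h →
          f.comp g = f.comp h → g = h) ↔
      Function.Injective f := by
  constructor
  · intro mono
    -- separation of cluster variables and integers
    have key : ∀ u v : K, u ∈ S.cluster ∪ Set.range ((↑) : ℤ → K) →
        v ∈ S.cluster ∪ Set.range ((↑) : ℤ → K) →
        ∀ (hu' : u ∈ S.algebra) (hv' : v ∈ S.algebra),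
        f ⟨u, hu'⟩ = f ⟨v, hv'⟩ → u = v := by
      intro u v hu hv hu' hv' hfe
      exact MonoAux.key_sep.{y₀} S T f mono hu hv hu' hv' hfe
    have hmapFn : ∀ (i : K) (hi : i ∈ S.algebra), mapFn S f i = ((f ⟨i, hi⟩ : ↥(T.algebra)) : L) := by
      intro i hi
      rw [mapFn, dif_pos hi]
    -- images of cluster variables are cluster variables
    have hσc : ∀ (i : K), i ∈ S.cluster → mapFn S f i ∈ T.cluster := by
      intro i hi
      rcases hf.cm1 i hi with h | ⟨n, hn⟩
      · exact h
      · exfalso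
        have hn' : ((n : K)) ∈ S.algebra := intCast_mem _ n
        have h1 : (⟨(n : K), hn'⟩ : ↥(S.algebra)) = (n : ↥(S.algebra)) := by
          apply Subtype.ext
          push_cast
          rfl
        have h2 : f ⟨i, MonoAux.cluster_mem_algebra S hi⟩ = f ⟨(n : K), hn'⟩ := by
          apply Subtype.ext
          rw [h1, map_intCast]
          rw [← hmapFn i (MonoAux.cluster_mem_algebra S hi), ← hn]
          push_cast
          rfl
        have heq : i = ((n : K)) :=
          key i ((n : K)) (Or.inl hi) (Or.inr ⟨n, rfl⟩) _ _ h2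
        have ht : Transcendental ℤ i := by
          have := hS.free.transcendental (⟨i, hi⟩ : ↥(S.cluster))
          exact this
        rw [heq] at ht
        exact ht (isAlgebraic_int n)
    set σ : ↥(S.cluster) → ↥(T.cluster) :=
      fun i => ⟨mapFn S f i, hσc i i.2⟩ with hσdef
    have hσinj : Function.Injective σ := by
      intro i j hij
      have h3 : mapFn S f i = mapFn S f j := congrArg Subtype.val hij
      rw [hmapFn _ (MonoAux.cluster_mem_algebra S i.2),
        hmapFn _ (MonoAux.cluster_mem_algebra S j.2)] at h3
      exact Subtype.ext (key i j (Or.inl i.2) (Or.inl j.2) _ _ (Subtype.ext h3))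
    -- the commuting square
    set Ψ : MvPolynomial (↥(S.cluster)) ℤ →+* ↥(S.algebra) :=
      MvPolynomial.eval₂Hom (Int.castRingHom ↥(S.algebra))
        (fun i => ⟨i, MonoAux.cluster_mem_algebra S i.2⟩) with hΨdef
    have square : ((T.algebra).subtype.comp f).comp Ψ
        = MvPolynomial.eval₂Hom (Int.castRingHom L) (fun i => ((σ i : L))) := by
      apply MvPolynomial.ringHom_ext
      · intro r
        simp only [RingHom.comp_apply, hΨdef, MvPolynomial.eval₂Hom_C, Int.coe_castRingHom,
          map_intCast, Subring.coe_subtype]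
      · intro i
        simp only [RingHom.comp_apply, hΨdef, MvPolynomial.eval₂Hom_X', Subring.coe_subtype]
        exact (hmapFn _ (MonoAux.cluster_mem_algebra S i.2)).symm
    have hΨcoe : ∀ P, ((Ψ P : ↥(S.algebra)) : K)
        = MvPolynomial.eval₂ (Int.castRingHom K) (fun i : ↥(S.cluster) => (i : K)) P := by
      intro P
      have h4 := MonoAux.hom_meval₂_int (S.algebra).subtype
        (fun i : ↥(S.cluster) => (⟨i, MonoAux.cluster_mem_algebra S i.2⟩ : ↥(S.algebra))) P
      simp only [Subring.coe_subtype] at h4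
      exact h4
    have hsurj : ∀ z ∈ Subring.closure S.cluster, ∃ P, ((Ψ P : ↥(S.algebra)) : K) = z := by
      intro z hz
      induction hz using Subring.closure_induction with
      | mem x hx => exact ⟨MvPolynomial.X ⟨x, hx⟩, by rw [hΨcoe, MvPolynomial.eval₂_X]⟩
      | zero => exact ⟨0, by simp [hΨcoe]⟩
      | one => exact ⟨1, by simp [hΨcoe]⟩
      | add x y _ _ hx hy =>
          obtain ⟨p, hp⟩ := hx; obtain ⟨q, hq⟩ := hy
          exact ⟨p + q, by rw [map_add]; push_cast; rw [hp, hq]⟩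
      | mul x y _ _ hx hy =>
          obtain ⟨p, hp⟩ := hx; obtain ⟨q, hq⟩ := hy
          exact ⟨p * q, by rw [map_mul]; push_cast; rw [hp, hq]⟩
      | neg x _ hx =>
          obtain ⟨p, hp⟩ := hx
          exact ⟨-p, by rw [map_neg]; push_cast; rw [hp]⟩
    -- injectivity on the polynomial ring on the initial cluster
    have inj0 : ∀ (c : ↥(S.algebra)), (c : K) ∈ Subring.closure S.cluster → f c = 0 → c = 0 := by
      intro c hcmem hfc
      obtain ⟨P, hP⟩ := hsurj _ hcmem
      have hc' : Ψ P = c := Subtype.ext hP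
      have h0 : MvPolynomial.eval₂ (Int.castRingHom L) (fun i => ((σ i : L))) P = 0 := by
        have h5 := RingHom.congr_fun square P
        simp only [RingHom.comp_apply, hc', hfc, map_zero, Subring.coe_subtype] at h5
        rw [← h5.symm]
        rfl
      have h1 : MvPolynomial.eval₂ (Int.castRingHom L) ((↑) : ↥(T.cluster) → L)
          (MvPolynomial.rename σ P) = 0 := by
        rw [MvPolynomial.eval₂_rename]
        exact h0
      have h2 : MvPolynomial.aeval ((↑) : ↥(T.cluster) → L) (MvPolynomial.rename σ P)
          = MvPolynomial.aeval ((↑) : ↥(T.cluster) → L) (0 : MvPolynomial (↥(T.cluster)) ℤ) := by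
        rw [MonoAux.maeval_int_eq, h1, map_zero]
      have h3 : MvPolynomial.rename σ P = 0 := hT.free h2
      have h4 : P = 0 := by
        apply MvPolynomial.rename_injective σ hσinj
        rw [h3, map_zero]
      rw [← hc', h4, map_zero]
    -- conclude injectivity via the fraction field structure
    intro a b hab
    set c : ↥(S.algebra) := a - b with hcdef
    have hfc : f c = 0 := by rw [hcdef, map_sub, hab, sub_self]
    have hcK : (c : K) ∈ Subfield.closure S.cluster := by
      rw [hS.ambient]
      trivial
    obtain ⟨p, hp, q, hq, hpq⟩ := Subfield.mem_closure_iff.mp hcK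
    have hab' : c = 0 → a = b := by
      intro h6
      have := congrArg (· + b) h6
      simpa [hcdef, sub_add_cancel] using this
    by_cases hq0 : q = 0
    · apply hab'
      apply Subtype.ext
      have h7 : (c : K) = 0 := by rw [← hpq, hq0, div_zero]
      simpa using h7
    · have hqA : q ∈ S.algebra :=
        Subring.closure_mono (MonoAux.cluster_subset_clusterVars S) hq
      set Q : ↥(S.algebra) := ⟨q, hqA⟩ with hQdef
      have hmul : ((c * Q : ↥(S.algebra)) : K) = p := by
        push_cast
        show (c : K) * q = p
        rw [← hpq, div_mul_cancel₀ _ hq0]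
      have hfcq : f (c * Q) = 0 := by rw [map_mul, hfc, zero_mul]
      have h8 : c * Q = 0 := inj0 _ (by rw [hmul]; exact hp) hfcq
      apply hab'
      apply Subtype.ext
      have h9 : (c : K) * q = 0 := by
        have := congrArg (Subtype.val) h8
        push_cast at this
        simpa [hQdef] using this
      have := mul_eq_zero.mp h9
      simpa [hq0] using this.resolve_right hq0
  · intro hinj X hX g h hg hh he
    apply RingHom.ext
    intro a
    exact hinj (RingHom.congr_fun he a)
end
end

section
/- Every injective rooted cluster morphism is ideal: if f : A(Σ) → A(Σ') is an injective rooted cluster morphism, then f(A(Σ)) = A(f(Σ)), where f(Σ) is the image seed. Consequently, every Σ-admissible sequence is (f,Σ,Σ')-biadmissible and f maps the set of cluster variables of A(Σ) into the set of cluster variables of A(Σ'). -/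
open scoped BigOperators
open scoped Classical

noncomputable section

universe u v w x₀

section AuxAlg

open MvPolynomial

variable {K : Type u} [Field K]

theorem algind_insert {s : Set K} {v : K}
    (h : AlgebraicIndependent ℤ ((↑) : s → K)) (hv : Transcendental (Algebra.adjoin ℤ s) v)
    (hvs : v ∉ s) : AlgebraicIndependent ℤ ((↑) : ↥(insert v s) → K) := by
  have h' : Transcendental (Algebra.adjoin ℤ (Set.range ((↑) : s → K))) v := by
    rwa [Subtype.range_coe]
  have h2 := (h.option_iff_transcendental v).2 h'
  convert h2.comp _ (Set.subtypeInsertEquivOption hvs).injective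
  ext x
  by_cases hx : ↑x = v <;> simp [hx, Set.subtypeInsertEquivOption]

theorem transcendental_of_algind_insert {s : Set K} {v : K} (hvs : v ∉ s)
    (h : AlgebraicIndependent ℤ ((↑) : ↥(insert v s) → K)) :
    Transcendental (Algebra.adjoin ℤ s) v := by
  have hs : AlgebraicIndependent ℤ ((↑) : s → K) :=
    h.comp (Set.inclusion (Set.subset_insert v s)) (Set.inclusion_injective _)
  have hopt : AlgebraicIndependent ℤ (fun o : Option s => o.elim v ((↑) : s → K)) := by
    have h3 := h.comp (Set.subtypeInsertEquivOption hvs).symm (Equiv.injective _)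
    convert h3 using 1
    ext (_ | y) <;> simp [Set.subtypeInsertEquivOption]
  have h4 := (hs.option_iff_transcendental v).1 hopt
  rwa [Subtype.range_coe] at h4

theorem transcendental_ne_zero {R₀ : Type*} [CommRing R₀] [Nontrivial R₀] [Algebra R₀ K] {x : K}
    (hx : Transcendental R₀ x) : x ≠ 0 := by
  rintro rfl
  exact hx ⟨Polynomial.X, Polynomial.X_ne_zero, by simp⟩

theorem nontrivial_subalgebra (R₀ : Subalgebra ℤ K) : Nontrivial R₀ :=
  nontrivial_of_ne 0 1 fun h => zero_ne_one (α := K) (by simpa using congrArg Subtype.val h)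

theorem transcendental_div {R₀ : Subalgebra ℤ K} {x e : K}
    (hx : Transcendental R₀ x) (he : e ∈ R₀) (he0 : e ≠ 0) :
    Transcendental R₀ (e / x) := by
  haveI := nontrivial_subalgebra R₀
  have hx0 : x ≠ 0 := transcendental_ne_zero hx
  rw [transcendental_iff] at hx ⊢
  intro p hp
  by_contra hp0
  set n := p.natDegree with hn
  set q : Polynomial R₀ :=
    ∑ i ∈ Finset.range (n + 1), Polynomial.C (p.coeff i * ⟨e, he⟩ ^ i) * Polynomial.X ^ (n - i)
    with hqdef
  have hq : Polynomial.aeval x q = 0 := by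
    have h1 : Polynomial.aeval x q
        = ∑ i ∈ Finset.range (n + 1), (p.coeff i : K) * e ^ i * x ^ (n - i) := by
      rw [hqdef, map_sum]
      refine Finset.sum_congr rfl fun i _ => ?_
      rw [map_mul, map_pow, Polynomial.aeval_C, Polynomial.aeval_X]
      push_cast
      rfl
    have h2 : Polynomial.aeval (e / x) p
        = ∑ i ∈ Finset.range (n + 1), (p.coeff i : K) * (e / x) ^ i := by
      rw [Polynomial.aeval_eq_sum_range]
      refine Finset.sum_congr rfl fun i _ => ?_
      rw [Algebra.smul_def]
      rfl
    have h3 : Polynomial.aeval x q = x ^ n * Polynomial.aeval (e / x) p := by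
      rw [h1, h2, Finset.mul_sum]
      refine Finset.sum_congr rfl fun i hi => ?_
      have hin : i ≤ n := Nat.lt_succ_iff.mp (Finset.mem_range.mp hi)
      rw [div_pow]
      rw [pow_sub₀ x hx0 hin]
      field_simp
    rw [h3, hp, mul_zero]
  have hq0 : q = 0 := hx q hq
  have hc : p.coeff n * (⟨e, he⟩ : R₀) ^ n = 0 := by
    have := congrArg (fun r => Polynomial.coeff r 0) hq0
    simp only [hqdef, Polynomial.finset_sum_coeff, Polynomial.coeff_zero] at this
    rw [← this]
    rw [Finset.sum_eq_single n]
    · simp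
    · intro i hi hne
      have hin : i ≤ n := Nat.lt_succ_iff.mp (Finset.mem_range.mp hi)
      have : n - i ≠ 0 := by omega
      simp [Polynomial.coeff_C_mul, Polynomial.coeff_X_pow, Ne.symm this]
    · intro hni
      exact absurd (Finset.self_mem_range_succ n) hni
  have hcK : (p.coeff n : K) * e ^ n = 0 := by
    have := congrArg (Subtype.val) hc
    push_cast at this
    simpa using this
  have : (p.coeff n : K) = 0 := by
    rcases mul_eq_zero.mp hcK with h | h
    · exact h
    · exact absurd h (pow_ne_zero _ he0)
  have : p.coeff n = 0 := by
    exact_mod_cast Subtype.ext this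
  exact Polynomial.leadingCoeff_ne_zero.mpr hp0 this

end AuxAlg
set_option linter.unusedSectionVars false

section AuxMon

variable {K : Type u} [Field K]

/-- Exponent Finsupp on a subtype, from an indexed family. -/
def monExp (tc : Set K) {β : Type*} (t : Finset β) (g : β → K)
    (hg : ∀ y ∈ t, g y ∈ tc) (c : β → ℕ) : (↥tc →₀ ℕ) :=
  ∑ y ∈ t.attach, Finsupp.single (⟨g y.1, hg y.1 y.2⟩ : tc) (c y.1)

theorem monomial_sum_one' {σ : Type*} {ι : Type*} (u : Finset ι) (f : ι → (σ →₀ ℕ)) :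
    (MvPolynomial.monomial (∑ i ∈ u, f i) (1 : ℤ)) =
      ∏ i ∈ u, MvPolynomial.monomial (f i) (1 : ℤ) := by
  classical
  induction u using Finset.induction with
  | empty => simp [MvPolynomial.monomial_zero', map_one]
  | insert _ _ hx ih =>
    rw [Finset.sum_insert hx, Finset.prod_insert hx, ← ih, MvPolynomial.monomial_mul, one_mul]

theorem monExp_aeval {tc : Set K} {β : Type*} (t : Finset β) (g : β → K)
    (hg : ∀ y ∈ t, g y ∈ tc) (c : β → ℕ) :
    MvPolynomial.aeval ((↑) : tc → K)
      (MvPolynomial.monomial (monExp tc t g hg c) (1 : ℤ)) = ∏ y ∈ t, g y ^ c y := by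
  rw [monExp, monomial_sum_one', map_prod]
  rw [← Finset.prod_attach t (fun y => g y ^ c y)]
  refine Finset.prod_congr rfl fun y _ => ?_
  rw [← MvPolynomial.X_pow_eq_monomial, map_pow, MvPolynomial.aeval_X]

theorem monExp_support {tc : Set K} {β : Type*} (t : Finset β) (g : β → K)
    (hg : ∀ y ∈ t, g y ∈ tc) (c : β → ℕ) (u : tc) (hu : monExp tc t g hg c u ≠ 0) :
    ∃ y ∈ t, g y = ↑u := by
  by_contra hc
  push_neg at hc
  apply hu
  rw [monExp, Finsupp.finset_sum_apply]
  refine Finset.sum_eq_zero fun y _ => ?_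
  rw [Finsupp.single_apply, if_neg]
  intro h
  exact hc y.1 y.2 (congrArg Subtype.val h)

theorem monExp_apply {tc : Set K} {β : Type*} (t : Finset β) (g : β → K)
    (hg : ∀ y ∈ t, g y ∈ tc) (c : β → ℕ) (hinj : Set.InjOn g t) {y : β} (hy : y ∈ t) :
    monExp tc t g hg c ⟨g y, hg y hy⟩ = c y := by
  rw [monExp, Finsupp.finset_sum_apply]
  rw [Finset.sum_eq_single_of_mem (⟨y, hy⟩ : {z // z ∈ t}) (Finset.mem_attach _ _)]
  · rw [Finsupp.single_apply, if_pos rfl]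
  · intro b _ hb
    rw [Finsupp.single_apply, if_neg]
    intro h
    exact hb (Subtype.ext (hinj b.2 hy (congrArg Subtype.val h)))

theorem two_monomials_ne_zero {tc : Set K}
    (h : AlgebraicIndependent ℤ ((↑) : tc → K)) (d₁ d₂ : tc →₀ ℕ) :
    MvPolynomial.aeval ((↑) : tc → K) (MvPolynomial.monomial d₁ (1 : ℤ)) +
      MvPolynomial.aeval ((↑) : tc → K) (MvPolynomial.monomial d₂ (1 : ℤ)) ≠ 0 := by
  intro h0
  have hpoly : (MvPolynomial.monomial d₁ (1 : ℤ) + MvPolynomial.monomial d₂ 1 :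
      MvPolynomial tc ℤ) = 0 := h (by rw [map_add, map_zero, h0])
  have hco := congrArg (MvPolynomial.coeff d₁) hpoly
  simp only [MvPolynomial.coeff_add, MvPolynomial.coeff_monomial, MvPolynomial.coeff_zero,
    if_pos rfl] at hco
  split_ifs at hco <;> omega

theorem four_monomials {tc : Set K}
    (h : AlgebraicIndependent ℤ ((↑) : tc → K)) (d₁ d₂ d₃ d₄ : tc →₀ ℕ)
    (heq : MvPolynomial.aeval ((↑) : tc → K) (MvPolynomial.monomial d₁ (1 : ℤ)) +
        MvPolynomial.aeval ((↑) : tc → K) (MvPolynomial.monomial d₂ (1 : ℤ)) =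
      MvPolynomial.aeval ((↑) : tc → K) (MvPolynomial.monomial d₃ (1 : ℤ)) +
        MvPolynomial.aeval ((↑) : tc → K) (MvPolynomial.monomial d₄ (1 : ℤ))) :
    (d₃ = d₁ ∨ d₃ = d₂) ∧ (d₄ = d₁ ∨ d₄ = d₂) := by
  have hpoly : (MvPolynomial.monomial d₁ (1 : ℤ) + MvPolynomial.monomial d₂ 1 :
      MvPolynomial tc ℤ) = MvPolynomial.monomial d₃ 1 + MvPolynomial.monomial d₄ 1 :=
    h (by rw [map_add, map_add, heq])
  constructor
  · by_contra hc
    push_neg at hc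
    have hco := congrArg (MvPolynomial.coeff d₃) hpoly
    simp only [MvPolynomial.coeff_add, MvPolynomial.coeff_monomial] at hco
    split_ifs at hco <;>
      first
        | omega
        | exact hc.1 (by assumption : d₁ = d₃).symm
        | exact hc.2 (by assumption : d₂ = d₃).symm
  · by_contra hc
    push_neg at hc
    have hco := congrArg (MvPolynomial.coeff d₄) hpoly
    simp only [MvPolynomial.coeff_add, MvPolynomial.coeff_monomial] at hco
    split_ifs at hco <;>
      first
        | omega
        | exact hc.1 (by assumption : d₁ = d₄).symm
        | exact hc.2 (by assumption : d₂ = d₄).symm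

end AuxMon
section AuxSeed

open Seed

variable {K : Type u} [Field K]

theorem skew_int_aux (da db dx A1 A2 C1 C2 : ℤ) (h1 : da * A1 = -(dx * A2))
    (h2 : dx * C1 = -(db * C2)) (hda : 0 < da) (hdb : 0 < db) (hdx : 0 < dx) :
    da * (|A1| * C1 + A1 * |C1|) + db * (|C2| * A2 + C2 * |A2|) = 0 := by
  have habs1 : da * |A1| = dx * |A2| := by
    have := congrArg abs h1
    rwa [abs_mul, abs_neg, abs_mul, abs_of_pos hda, abs_of_pos hdx] at this
  have habs2 : dx * |C1| = db * |C2| := by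
    have := congrArg abs h2
    rwa [abs_mul, abs_neg, abs_mul, abs_of_pos hdx, abs_of_pos hdb] at this
  have key : dx * (da * (|A1| * C1 + A1 * |C1|) + db * (|C2| * A2 + C2 * |A2|)) = 0 := by
    linear_combination (dx * C1) * habs1 + (dx * |C1|) * h1 + (-(dx * A2)) * habs2 +
      (dx * |A2|) * h2
  exact (mul_eq_zero.mp key).resolve_left (by omega)

theorem half_exists (p q : ℤ) : ∃ r, |p| * q + p * |q| = 2 * r := by
  rcases abs_cases p with ⟨hp, _⟩ | ⟨hp, _⟩ <;> rcases abs_cases q with ⟨hq, _⟩ | ⟨hq, _⟩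
  · exact ⟨p * q, by rw [hp, hq]; ring⟩
  · exact ⟨0, by rw [hp, hq]; ring⟩
  · exact ⟨0, by rw [hp, hq]; ring⟩
  · exact ⟨-(p * q), by rw [hp, hq]; ring⟩

theorem half_div (p q : ℤ) : (|p| * q + p * |q|) / 2 = |p| * q / 2 + p * |q| / 2 ∨ True := by
  exact Or.inr trivial

/-- `mutB` unfolded at a pair where neither index is `k`, with exact division. -/
theorem mutB_off {I : Type*} (B : I → I → ℤ) (k y z : I) (hy : y ≠ k) (hz : z ≠ k)
    {r : ℤ} (hr : |B y k| * B k z + B y k * |B k z| = 2 * r) :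
    mutB B k y z = B y z + r := by
  rw [mutB, if_neg (by tauto), hr, Int.mul_ediv_cancel_left _ (by norm_num)]

theorem algind_mem_ne_zero {s : Set K} (h : AlgebraicIndependent ℤ ((↑) : s → K))
    {y : K} (hy : y ∈ s) : y ≠ 0 := by
  intro h0
  have h1 : (MvPolynomial.aeval ((↑) : s → K) : MvPolynomial s ℤ →ₐ[ℤ] K)
        (MvPolynomial.X ⟨y, hy⟩) =
      (MvPolynomial.aeval ((↑) : s → K) : MvPolynomial s ℤ →ₐ[ℤ] K) 0 := by
    rw [MvPolynomial.aeval_X, map_zero]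
    exact h0
  exact MvPolynomial.X_ne_zero _ (h h1)

theorem algind_mem_ne_intCast {s : Set K} (h : AlgebraicIndependent ℤ ((↑) : s → K))
    {y : K} (hy : y ∈ s) (n : ℤ) : y ≠ (n : K) := by
  intro h0
  have h1 : (MvPolynomial.aeval ((↑) : s → K) : MvPolynomial s ℤ →ₐ[ℤ] K)
        (MvPolynomial.X ⟨y, hy⟩) =
      (MvPolynomial.aeval ((↑) : s → K) : MvPolynomial s ℤ →ₐ[ℤ] K) (MvPolynomial.C n) := by
    rw [MvPolynomial.aeval_X, MvPolynomial.aeval_C]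
    exact h0.trans (eq_intCast (algebraMap ℤ K) n).symm
  have h2 := h h1
  have h3 := congrArg (MvPolynomial.coeff (Finsupp.single (⟨y, hy⟩ : s) 1)) h2
  rw [MvPolynomial.coeff_X, MvPolynomial.coeff_C, if_pos rfl, if_neg (fun hh => one_ne_zero (Finsupp.single_eq_zero.mp hh.symm))] at h3
  exact one_ne_zero h3

namespace Seed

theorem mutateSeq_append_s11 (S : Seed K) (l m : List K) :
    S.mutateSeq (l ++ m) = (S.mutateSeq l).mutateSeq m := by
  induction l generalizing S with
  | nil => rfl
  | cons y l ih => simpa [mutateSeq] using ih (S.mutate y)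

theorem admissible_append_s11 (S : Seed K) (l m : List K) :
    S.Admissible (l ++ m) ↔ S.Admissible l ∧ (S.mutateSeq l).Admissible m := by
  induction l generalizing S with
  | nil => simp [Admissible, mutateSeq]
  | cons y l ih => simp [Admissible, mutateSeq, ih (S.mutate y), and_assoc]

theorem mutSeqMap_append_s11 (S : Seed K) (l m : List K) :
    S.mutSeqMap (l ++ m) = (S.mutateSeq l).mutSeqMap m ∘ S.mutSeqMap l := by
  induction l generalizing S with
  | nil => rfl
  | cons y l ih =>
    show (S.mutate y).mutSeqMap (l ++ m) ∘ S.mutMap y = _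
    rw [ih (S.mutate y)]
    rfl

theorem mutMap_image {s : Set K} (S : Seed K) {x : K} (hx : x ∈ s) :
    S.mutMap x '' s = insert (S.mutVar x) (s \ {x}) := by
  ext z
  simp only [Set.mem_image, mutMap, Set.mem_insert_iff, Set.mem_diff, Set.mem_singleton_iff]
  constructor
  · rintro ⟨y, hy, rfl⟩
    by_cases h : y = x
    · left; rw [if_pos h]
    · right; rw [if_neg h]; exact ⟨hy, h⟩
  · rintro (rfl | ⟨hz, hzx⟩)
    · exact ⟨x, hx, if_pos rfl⟩
    · exact ⟨z, hz, if_neg hzx⟩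

theorem mutateSeq_images (S : Seed K) (l : List K) (h : S.Admissible l) :
    (S.mutateSeq l).cluster = S.mutSeqMap l '' S.cluster ∧
      (S.mutateSeq l).ex = S.mutSeqMap l '' S.ex := by
  induction l generalizing S with
  | nil => simp [mutateSeq, mutSeqMap]
  | cons y l ih =>
    obtain ⟨hy, hl⟩ := h
    obtain ⟨ih1, ih2⟩ := ih (S.mutate y) hl
    constructor
    · show (S.mutateSeq (y :: l)).cluster = ((S.mutate y).mutSeqMap l ∘ S.mutMap y) '' S.cluster
      rw [Set.image_comp, S.mutMap_image (S.ex_subset hy)]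
      exact ih1
    · show (S.mutateSeq (y :: l)).ex = ((S.mutate y).mutSeqMap l ∘ S.mutMap y) '' S.ex
      rw [Set.image_comp, S.mutMap_image hy]
      exact ih2

theorem cluster_subset_clusterVars (S : Seed K) (l : List K) (h : S.Admissible l) :
    (S.mutateSeq l).cluster ⊆ S.clusterVars := fun z hz =>
  Set.mem_iUnion.mpr ⟨l, Set.mem_iUnion.mpr ⟨h, hz⟩⟩

theorem clusterVars_subset_algebra (S : Seed K) : S.clusterVars ⊆ S.algebra :=
  Subring.subset_closure

/-- The properties of a seed preserved along admissible mutations. -/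
def Nice (S : Seed K) : Prop :=
  AlgebraicIndependent ℤ ((↑) : S.cluster → K) ∧ S.LocFinite ∧ S.SkewSymmetrizable

theorem Nice.diag_zero {S : Seed K} (hG : S.Nice) {x : K} (hx : x ∈ S.cluster) :
    S.B x x = 0 := by
  obtain ⟨d, hd1, hd2⟩ := hG.2.2
  have h1 := hd2 x hx x hx
  have h2 := hd1 x hx
  have h3 : d x * S.B x x = 0 := by omega
  exact (mul_eq_zero.mp h3).resolve_left (by omega)

theorem Nice.pos_finite {S : Seed K} (hG : S.Nice) {x : K} (hx : x ∈ S.cluster) :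
    {y | y ∈ S.cluster ∧ 0 < S.B x y}.Finite :=
  ((hG.2.1 x hx).1).subset fun y hy => ⟨hy.1, hy.2.ne'⟩

theorem Nice.neg_finite {S : Seed K} (hG : S.Nice) {x : K} (hx : x ∈ S.cluster) :
    {y | y ∈ S.cluster ∧ S.B x y < 0}.Finite :=
  ((hG.2.1 x hx).1).subset fun y hy => ⟨hy.1, hy.2.ne⟩

theorem Nice.pos_subset {S : Seed K} (hG : S.Nice) {x : K} (hx : x ∈ S.cluster) :
    {y | y ∈ S.cluster ∧ 0 < S.B x y} ⊆ S.cluster \ {x} := by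
  intro y hy
  obtain ⟨hy1, hy2⟩ := hy
  refine ⟨hy1, fun h => ?_⟩
  rw [Set.mem_singleton_iff] at h
  subst h
  rw [hG.diag_zero hx] at hy2
  exact lt_irrefl 0 hy2

theorem Nice.neg_subset {S : Seed K} (hG : S.Nice) {x : K} (hx : x ∈ S.cluster) :
    {y | y ∈ S.cluster ∧ S.B x y < 0} ⊆ S.cluster \ {x} := by
  intro y hy
  obtain ⟨hy1, hy2⟩ := hy
  refine ⟨hy1, fun h => ?_⟩
  rw [Set.mem_singleton_iff] at h
  subst h
  rw [hG.diag_zero hx] at hy2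
  exact lt_irrefl 0 hy2

/-- The exchange relation, Finset form. -/
theorem Nice.exchange {S : Seed K} (hG : S.Nice) {x : K} (hx : x ∈ S.cluster) :
    S.mutVar x * x =
      (∏ y ∈ (hG.pos_finite hx).toFinset, y ^ (S.B x y).toNat) +
        ∏ y ∈ (hG.neg_finite hx).toFinset, y ^ (-S.B x y).toNat := by
  have hx0 : x ≠ 0 := algind_mem_ne_zero hG.1 hx
  rw [mutVar, finprod_mem_eq_finite_toFinset_prod _ (hG.pos_finite hx),
    finprod_mem_eq_finite_toFinset_prod _ (hG.neg_finite hx), div_mul_cancel₀ _ hx0]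

end Seed

end AuxSeed
namespace Seed

variable {K : Type u} [Field K]

theorem Nice.mutVar_trans {S : Seed K} (hG : S.Nice) {x : K} (hx : x ∈ S.ex) :
    Transcendental (Algebra.adjoin ℤ (S.cluster \ {x})) (S.mutVar x) := by
  have hxc := S.ex_subset hx
  have hx0 : x ≠ 0 := algind_mem_ne_zero hG.1 hxc
  set e := (∏ y ∈ (hG.pos_finite hxc).toFinset, y ^ (S.B x y).toNat) +
      ∏ y ∈ (hG.neg_finite hxc).toFinset, y ^ (-S.B x y).toNat with he_def
  have hve : S.mutVar x = e / x := by
    rw [he_def, ← hG.exchange hxc, mul_div_cancel_right₀ _ hx0]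
  have hsubp : ∀ y ∈ (hG.pos_finite hxc).toFinset, y ∈ S.cluster \ {x} := fun y hy =>
    hG.pos_subset hxc ((hG.pos_finite hxc).mem_toFinset.mp hy)
  have hsubm : ∀ y ∈ (hG.neg_finite hxc).toFinset, y ∈ S.cluster \ {x} := fun y hy =>
    hG.neg_subset hxc ((hG.neg_finite hxc).mem_toFinset.mp hy)
  have hind' : AlgebraicIndependent ℤ ((↑) : ↥(S.cluster \ {x}) → K) :=
    hG.1.mono Set.diff_subset
  have he0 : e ≠ 0 := by
    intro h0
    refine two_monomials_ne_zero hind'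
      (monExp _ ((hG.pos_finite hxc).toFinset) (fun y => y) hsubp (fun y => (S.B x y).toNat))
      (monExp _ ((hG.neg_finite hxc).toFinset) (fun y => y) hsubm (fun y => (-S.B x y).toNat)) ?_
    simp only [monExp_aeval]
    exact h0
  have he_mem : e ∈ Algebra.adjoin ℤ (S.cluster \ {x}) := by
    refine Subalgebra.add_mem _ (Subalgebra.prod_mem _ fun y hy => ?_)
      (Subalgebra.prod_mem _ fun y hy => ?_)
    · exact Subalgebra.pow_mem _ (Algebra.subset_adjoin (hsubp y hy)) _
    · exact Subalgebra.pow_mem _ (Algebra.subset_adjoin (hsubm y hy)) _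
  have hseteq : insert x (S.cluster \ {x}) = S.cluster := by
    rw [Set.insert_diff_singleton, Set.insert_eq_self.mpr hxc]
  have hxtrans : Transcendental (Algebra.adjoin ℤ (S.cluster \ {x})) x := by
    refine transcendental_of_algind_insert (by simp) ?_
    rw [hseteq]
    exact hG.1
  rw [hve]
  exact transcendental_div hxtrans he_mem he0

theorem Nice.mutVar_notmem {S : Seed K} (hG : S.Nice) {x : K} (hx : x ∈ S.ex) :
    S.mutVar x ∉ S.cluster \ {x} := by
  intro hmem
  haveI := nontrivial_subalgebra (Algebra.adjoin ℤ (S.cluster \ {x}))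
  exact hG.mutVar_trans hx
    (isAlgebraic_algebraMap
      (⟨S.mutVar x, Algebra.subset_adjoin hmem⟩ : Algebra.adjoin ℤ (S.cluster \ {x})))

theorem Nice.mutate_nice {S : Seed K} (hG : S.Nice) {x : K} (hx : x ∈ S.ex) :
    (S.mutate x).Nice := by
  have hxc := S.ex_subset hx
  have hind' : AlgebraicIndependent ℤ ((↑) : ↥(S.cluster \ {x}) → K) :=
    hG.1.mono Set.diff_subset
  set v := S.mutVar x with hv
  have hclus : (S.mutate x).cluster = insert v (S.cluster \ {x}) := rfl
  have hsub_mem : ∀ w ∈ (S.mutate x).cluster, (if w = v then x else w) ∈ S.cluster := by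
    intro w hw
    by_cases h : w = v
    · rw [if_pos h]; exact hxc
    · rw [if_neg h]
      rcases hw with h' | h'
      · exact absurd h' h
      · exact h'.1
  refine ⟨?_, ?_, ?_⟩
  · rw [hclus]
    exact algind_insert hind' (hG.mutVar_trans hx) (hG.mutVar_notmem hx)
  · -- local finiteness
    intro y hy
    have hy' := hsub_mem y hy
    set y' := if y = v then x else y with hy'def
    constructor
    · refine Set.Finite.subset (Set.Finite.union (Set.finite_singleton v)
        (Set.Finite.union (hG.2.1 y' hy').1 (hG.2.1 x hxc).1)) ?_
      rintro z ⟨hz, hbz⟩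
      by_cases hzv : z = v
      · exact Or.inl hzv
      · refine Or.inr ?_
        have hzc : z ∈ S.cluster := by
          rcases hz with h' | h'
          · exact absurd h' hzv
          · exact h'.1
        have hbz' : mutB S.B x y' z ≠ 0 := by
          have : (S.mutate x).B y z = mutB S.B x y' z := by
            show mutB S.B x (if y = S.mutVar x then x else y) (if z = S.mutVar x then x else z)
              = _
            rw [← hv, if_neg hzv, ← hy'def]
          rwa [this] at hbz
        rw [mutB] at hbz'
        split_ifs at hbz' with hcase
        · exact Or.inl ⟨hzc, fun h0 => hbz' (by rw [h0, neg_zero])⟩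
        · by_cases h1 : S.B x z = 0
          · refine Or.inl ⟨hzc, fun h0 => hbz' ?_⟩
            rw [h0, h1]
            simp
          · exact Or.inr ⟨hzc, h1⟩
    · refine Set.Finite.subset (Set.Finite.union (Set.finite_singleton v)
        (Set.Finite.union (hG.2.1 y' hy').2 (hG.2.1 x hxc).2)) ?_
      rintro z ⟨hz, hbz⟩
      by_cases hzv : z = v
      · exact Or.inl hzv
      · refine Or.inr ?_
        have hzc : z ∈ S.cluster := by
          rcases hz with h' | h'
          · exact absurd h' hzv
          · exact h'.1
        have hbz' : mutB S.B x z y' ≠ 0 := by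
          have : (S.mutate x).B z y = mutB S.B x z y' := by
            show mutB S.B x (if z = S.mutVar x then x else z) (if y = S.mutVar x then x else y)
              = _
            rw [← hv, if_neg hzv, ← hy'def]
          rwa [this] at hbz
        rw [mutB] at hbz'
        split_ifs at hbz' with hcase
        · exact Or.inl ⟨hzc, fun h0 => hbz' (by rw [h0, neg_zero])⟩
        · by_cases h1 : S.B z x = 0
          · refine Or.inl ⟨hzc, fun h0 => hbz' ?_⟩
            rw [h0, h1]
            simp
          · exact Or.inr ⟨hzc, h1⟩
  · -- skew symmetrizability
    obtain ⟨d, hd1, hd2⟩ := hG.2.2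
    have claim : ∀ a ∈ S.cluster, ∀ b ∈ S.cluster,
        d a * mutB S.B x a b = -(d b * mutB S.B x b a) := by
      intro a ha b hb
      by_cases hab : a = x ∨ b = x
      · rw [mutB, if_pos hab, mutB, if_pos (Or.symm hab)]
        have := hd2 a ha b hb
        linarith
      · push_neg at hab
        obtain ⟨r1, hr1⟩ := half_exists (S.B a x) (S.B x b)
        obtain ⟨r2, hr2⟩ := half_exists (S.B b x) (S.B x a)
        rw [mutB_off S.B x a b hab.1 hab.2 hr1, mutB_off S.B x b a hab.2 hab.1 hr2]
        have hkey := skew_int_aux (d a) (d b) (d x) (S.B a x) (S.B x a) (S.B x b) (S.B b x)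
          (hd2 a ha x hxc) (hd2 x hxc b hb) (hd1 a ha) (hd1 b hb) (hd1 x hxc)
        rw [hr1, hr2] at hkey
        have := hd2 a ha b hb
        linarith
    refine ⟨fun z => if z = v then d x else d z, fun y hy => ?_, fun y hy z hz => ?_⟩
    · show 0 < if y = v then d x else d y
      by_cases h : y = v
      · rw [if_pos h]; exact hd1 x hxc
      · rw [if_neg h]
        rcases hy with h' | h'
        · exact absurd h' h
        · exact hd1 y h'.1
    · have hy' := hsub_mem y hy
      have hz' := hsub_mem z hz
      have e1 : (S.mutate x).B y z = mutB S.B x (if y = v then x else y) (if z = v then x else z)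
        := rfl
      have e2 : (S.mutate x).B z y = mutB S.B x (if z = v then x else z) (if y = v then x else y)
        := rfl
      have e3 : (if y = v then d x else d y) = d (if y = v then x else y) := by
        by_cases h : y = v <;> simp [h]
      have e4 : (if z = v then d x else d z) = d (if z = v then x else z) := by
        by_cases h : z = v <;> simp [h]
      show (if y = v then d x else d y) * (S.mutate x).B y z
        = -((if z = v then d x else d z) * (S.mutate x).B z y)
      rw [e1, e2, e3, e4]
      exact claim _ hy' _ hz'

theorem Nice.mutateSeq_nice {S : Seed K} (hG : S.Nice) (l : List K) (h : S.Admissible l) :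
    (S.mutateSeq l).Nice := by
  induction l generalizing S with
  | nil => exact hG
  | cons y l ih => exact ih (hG.mutate_nice h.1) h.2

end Seed
section Morph

variable {K : Type u} {L : Type v} [Field K] [Field L]
variable {S : Seed K} {T : Seed L} (f : S.algebra →+* T.algebra)

theorem mapFn_of_mem {a : K} (ha : a ∈ S.algebra) : mapFn S f a = (f ⟨a, ha⟩ : L) :=
  dif_pos ha

theorem mapFn_add {a b : K} (ha : a ∈ S.algebra) (hb : b ∈ S.algebra) :
    mapFn S f (a + b) = mapFn S f a + mapFn S f b := by
  rw [mapFn_of_mem f (add_mem ha hb), mapFn_of_mem f ha, mapFn_of_mem f hb]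
  have : (⟨a + b, add_mem ha hb⟩ : S.algebra) = ⟨a, ha⟩ + ⟨b, hb⟩ := rfl
  rw [this, map_add]
  push_cast
  rfl

theorem mapFn_mul {a b : K} (ha : a ∈ S.algebra) (hb : b ∈ S.algebra) :
    mapFn S f (a * b) = mapFn S f a * mapFn S f b := by
  rw [mapFn_of_mem f (mul_mem ha hb), mapFn_of_mem f ha, mapFn_of_mem f hb]
  have : (⟨a * b, mul_mem ha hb⟩ : S.algebra) = ⟨a, ha⟩ * ⟨b, hb⟩ := rfl
  rw [this, map_mul]
  push_cast
  rfl

theorem mapFn_one : mapFn S f 1 = 1 := by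
  rw [mapFn_of_mem f (one_mem _)]
  have : (⟨(1 : K), one_mem _⟩ : S.algebra) = 1 := rfl
  rw [this, map_one]
  push_cast
  rfl

theorem mapFn_zero : mapFn S f 0 = 0 := by
  rw [mapFn_of_mem f (zero_mem _)]
  have : (⟨(0 : K), zero_mem _⟩ : S.algebra) = 0 := rfl
  rw [this, map_zero]
  push_cast
  rfl

theorem mapFn_neg {a : K} (ha : a ∈ S.algebra) : mapFn S f (-a) = -mapFn S f a := by
  rw [mapFn_of_mem f (neg_mem ha), mapFn_of_mem f ha]
  have : (⟨-a, neg_mem ha⟩ : S.algebra) = -⟨a, ha⟩ := rfl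
  rw [this, map_neg]
  push_cast
  rfl

theorem mapFn_pow {a : K} (ha : a ∈ S.algebra) (n : ℕ) :
    mapFn S f (a ^ n) = mapFn S f a ^ n := by
  induction n with
  | zero => simpa using mapFn_one f
  | succ n ih => rw [pow_succ, mapFn_mul f (pow_mem ha n) ha, ih, pow_succ]

theorem mapFn_intCast_s11 (n : ℤ) : mapFn S f (n : K) = (n : L) := by
  rw [mapFn_of_mem f (intCast_mem _ n)]
  have : (⟨(n : K), intCast_mem _ n⟩ : S.algebra) = (n : S.algebra) := by
    ext
    push_cast
    rfl
  rw [this, map_intCast]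
  push_cast
  rfl

theorem mapFn_prod {β : Type*} (t : Finset β) (g : β → K) (hg : ∀ y ∈ t, g y ∈ S.algebra) :
    mapFn S f (∏ y ∈ t, g y) = ∏ y ∈ t, mapFn S f (g y) := by
  classical
  induction t using Finset.induction with
  | empty => simpa using mapFn_one f
  | @insert a u ha ih =>
    rw [Finset.prod_insert ha, Finset.prod_insert ha,
      mapFn_mul f (hg a (Finset.mem_insert_self a u))
        (prod_mem fun y hy => hg y (Finset.mem_insert_of_mem hy)),
      ih fun y hy => hg y (Finset.mem_insert_of_mem hy)]

theorem mapFn_injOn (hinj : Function.Injective f) {a b : K}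
    (ha : a ∈ S.algebra) (hb : b ∈ S.algebra) (h : mapFn S f a = mapFn S f b) : a = b := by
  rw [mapFn_of_mem f ha, mapFn_of_mem f hb] at h
  have := hinj (Subtype.ext h)
  exact congrArg Subtype.val this

theorem cluster_mem_algebra (S : Seed K) {y : K} (hy : y ∈ S.cluster) : y ∈ S.algebra :=
  S.clusterVars_subset_algebra (S.cluster_subset_clusterVars [] trivial hy)

theorem mapFn_mem_cluster (hf : IsRCM S T f) (hinj : Function.Injective f)
    (hfree : AlgebraicIndependent ℤ ((↑) : S.cluster → K)) {y : K} (hy : y ∈ S.cluster) :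
    mapFn S f y ∈ T.cluster := by
  rcases hf.cm1 y hy with h | ⟨n, hn⟩
  · exact h
  · exfalso
    have h1 : mapFn S f y = mapFn S f ((n : K)) := by rw [hn.symm, mapFn_intCast_s11]
    have h2 := mapFn_injOn f hinj (cluster_mem_algebra S hy) (intCast_mem _ n) h1
    exact algind_mem_ne_intCast hfree hy n h2

theorem mapFn_mem_ex (hf : IsRCM S T f) (hinj : Function.Injective f)
    (hfree : AlgebraicIndependent ℤ ((↑) : S.cluster → K)) {y : K} (hy : y ∈ S.ex) :
    mapFn S f y ∈ T.ex := by
  rcases hf.cm2 y hy with h | ⟨n, hn⟩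
  · exact h
  · exfalso
    have h1 : mapFn S f y = mapFn S f ((n : K)) := by rw [hn.symm, mapFn_intCast_s11]
    have h2 := mapFn_injOn f hinj (cluster_mem_algebra S (S.ex_subset hy)) (intCast_mem _ n) h1
    exact algind_mem_ne_intCast hfree (S.ex_subset hy) n h2

end Morph
section Master

variable {K : Type u} {L : Type v} [Field K] [Field L]

theorem master (S : Seed K) (T : Seed L) (f : S.algebra →+* T.algebra)
    (hS : IsSeed S) (hT : IsSeed T) (hf : IsRCM S T f) (hinj : Function.Injective f) :
    ∀ l : List K, S.Admissible l →
      T.Admissible (l.map (mapFn S f)) ∧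
      (imageSeed S f).Admissible (l.map (mapFn S f)) ∧
      ((imageSeed S f).mutateSeq (l.map (mapFn S f))).cluster
        = mapFn S f '' (S.mutateSeq l).cluster ∧
      ((imageSeed S f).mutateSeq (l.map (mapFn S f))).ex
        = mapFn S f '' (S.mutateSeq l).ex ∧
      ((imageSeed S f).mutateSeq (l.map (mapFn S f))).B
        = (T.mutateSeq (l.map (mapFn S f))).B ∧
      mapFn S f '' (S.mutateSeq l).cluster ⊆ (T.mutateSeq (l.map (mapFn S f))).cluster ∧
      mapFn S f '' (S.mutateSeq l).ex ⊆ (T.mutateSeq (l.map (mapFn S f))).ex := by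
  have hSnice : S.Nice := ⟨hS.free, hS.locFin, hS.skew⟩
  have hTnice : T.Nice := ⟨hT.free, hT.locFin, hT.skew⟩
  intro l
  induction l using List.reverseRecOn with
  | nil =>
    intro _
    have himc : (imageSeed S f).cluster = (mapFn S f) '' S.cluster :=
      Set.inter_eq_self_of_subset_right
        (by rintro z ⟨y, hy, rfl⟩; exact mapFn_mem_cluster f hf hinj hS.free hy)
    have hime : (imageSeed S f).ex = (mapFn S f) '' S.ex :=
      Set.inter_eq_self_of_subset_right
        (by rintro z ⟨y, hy, rfl⟩; exact mapFn_mem_ex f hf hinj hS.free hy)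
    refine ⟨trivial, trivial, himc, hime, rfl, ?_, ?_⟩
    · rintro z ⟨y, hy, rfl⟩; exact mapFn_mem_cluster f hf hinj hS.free hy
    · rintro z ⟨y, hy, rfl⟩; exact mapFn_mem_ex f hf hinj hS.free hy
  | append_singleton l' x ih =>
    intro hadm
    obtain ⟨hadm', hxadm⟩ := (S.admissible_append_s11 l' [x]).mp hadm
    have hxex : x ∈ (S.mutateSeq l').ex := hxadm.1
    obtain ⟨hT1, hI1, hc, he, hB, hsc, hse⟩ := ih hadm'
    set m' := l'.map (mapFn S f) with hm'
    set Sl := S.mutateSeq l' with hSl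
    set Tl := T.mutateSeq m' with hTl
    set Il := (imageSeed S f).mutateSeq m' with hIl
    have hmap : (l' ++ [x]).map (mapFn S f) = m' ++ [(mapFn S f) x] := by rw [List.map_append]; rfl
    have hNS' : Sl.Nice := hSnice.mutateSeq_nice l' hadm'
    have hNTl : Tl.Nice := hTnice.mutateSeq_nice m' hT1
    have hxc' : x ∈ Sl.cluster := Sl.ex_subset hxex
    have hFx_ex : (mapFn S f) x ∈ Tl.ex := hse ⟨x, hxex, rfl⟩
    have hFxc : (mapFn S f) x ∈ Tl.cluster := Tl.ex_subset hFx_ex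
    have hTadm : T.Admissible (m' ++ [(mapFn S f) x]) :=
      (T.admissible_append_s11 m' [(mapFn S f) x]).mpr ⟨hT1, ⟨hFx_ex, trivial⟩⟩
    -- algebra memberships
    have hclsub : Sl.cluster ⊆ (S.algebra : Set K) := fun z hz =>
      S.clusterVars_subset_algebra (S.cluster_subset_clusterVars l' hadm' hz)
    have hxalg : x ∈ S.algebra := hclsub hxc'
    have hvclus : Sl.mutVar x ∈ (S.mutateSeq (l' ++ [x])).cluster := by
      rw [S.mutateSeq_append_s11 l' [x]]
      exact Set.mem_insert _ _
    have hvalg : Sl.mutVar x ∈ S.algebra :=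
      S.clusterVars_subset_algebra (S.cluster_subset_clusterVars _ hadm hvclus)
    -- the key identity (mapFn S f)(mutVar) = mutVar' via CM3
    obtain ⟨w₀, hw₀, hw₀x⟩ : ∃ w₀ ∈ S.ex, S.mutSeqMap l' w₀ = x := by
      have h := (S.mutateSeq_images l' hadm').2
      rw [h] at hxex
      obtain ⟨w₀, hw₀, hw⟩ := hxex
      exact ⟨w₀, hw₀, hw⟩
    have hbi' : Biadmissible S T (mapFn S f) l' := ⟨hadm', hT1⟩
    have hbi : Biadmissible S T (mapFn S f) (l' ++ [x]) := ⟨hadm, by rw [hmap]; exact hTadm⟩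
    have hcm3' : (mapFn S f) (S.mutSeqMap l' w₀) = T.mutSeqMap m' ((mapFn S f) w₀) :=
      hf.cm3 l' hbi' w₀ (S.ex_subset hw₀)
    have hstar : (mapFn S f) (Sl.mutVar x) = Tl.mutVar ((mapFn S f) x) := by
      have h0 : (mapFn S f) (S.mutSeqMap (l' ++ [x]) w₀)
          = T.mutSeqMap ((l' ++ [x]).map (mapFn S f)) ((mapFn S f) w₀) := hf.cm3 (l' ++ [x]) hbi w₀ (S.ex_subset hw₀)
      have hL : S.mutSeqMap (l' ++ [x]) w₀ = Sl.mutVar x := by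
        rw [S.mutSeqMap_append_s11 l' [x]]
        show (Sl.mutate x).mutSeqMap [] (Sl.mutMap x (S.mutSeqMap l' w₀)) = _
        rw [hw₀x]
        show Sl.mutMap x x = _
        rw [Seed.mutMap, if_pos rfl]
      have hR : T.mutSeqMap ((l' ++ [x]).map (mapFn S f)) ((mapFn S f) w₀) = Tl.mutVar ((mapFn S f) x) := by
        rw [hmap, T.mutSeqMap_append_s11 m' [(mapFn S f) x]]
        show (Tl.mutate ((mapFn S f) x)).mutSeqMap [] (Tl.mutMap ((mapFn S f) x) (T.mutSeqMap m' ((mapFn S f) w₀))) = _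
        rw [← hcm3', hw₀x]
        show Tl.mutMap ((mapFn S f) x) ((mapFn S f) x) = _
        rw [Seed.mutMap, if_pos rfl]
      rw [hL] at h0
      rw [hR] at h0
      exact h0
    -- exchange relations
    have hexS := hNS'.exchange hxc'
    have hexT := hNTl.exchange hFxc
    set sp := (hNS'.pos_finite hxc').toFinset with hsp
    set sm := (hNS'.neg_finite hxc').toFinset with hsm
    set tp := (hNTl.pos_finite hFxc).toFinset with htp
    set tm := (hNTl.neg_finite hFxc).toFinset with htm
    have hsp_mem : ∀ y ∈ sp, y ∈ Sl.cluster := fun y hy =>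
      (((hNS'.pos_finite hxc').mem_toFinset.mp hy)).1
    have hsm_mem : ∀ y ∈ sm, y ∈ Sl.cluster := fun y hy =>
      (((hNS'.neg_finite hxc').mem_toFinset.mp hy)).1
    have htp_mem : ∀ z ∈ tp, z ∈ Tl.cluster := fun z hz =>
      (((hNTl.pos_finite hFxc).mem_toFinset.mp hz)).1
    have htm_mem : ∀ z ∈ tm, z ∈ Tl.cluster := fun z hz =>
      (((hNTl.neg_finite hFxc).mem_toFinset.mp hz)).1
    have hg₁ : ∀ y ∈ sp, (mapFn S f) y ∈ Tl.cluster := fun y hy => hsc ⟨y, hsp_mem y hy, rfl⟩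
    have hg₂ : ∀ y ∈ sm, (mapFn S f) y ∈ Tl.cluster := fun y hy => hsc ⟨y, hsm_mem y hy, rfl⟩
    -- push (mapFn S f) through the exchange relation
    have hFP : (mapFn S f) (Sl.mutVar x * x) = Tl.mutVar ((mapFn S f) x) * (mapFn S f) x := by
      rw [mapFn_mul f hvalg hxalg, hstar]
    have heq : (∏ y ∈ sp, (mapFn S f) y ^ (Sl.B x y).toNat) + ∏ y ∈ sm, (mapFn S f) y ^ (-Sl.B x y).toNat
        = (∏ z ∈ tp, z ^ (Tl.B ((mapFn S f) x) z).toNat) + ∏ z ∈ tm, z ^ (-Tl.B ((mapFn S f) x) z).toNat := by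
      have h1 := congrArg (mapFn S f) hexS
      rw [hFP, hexT] at h1
      rw [h1]
      rw [mapFn_add f (prod_mem fun y hy => pow_mem (hclsub (hsp_mem y hy)) _)
        (prod_mem fun y hy => pow_mem (hclsub (hsm_mem y hy)) _),
        mapFn_prod f sp _ (fun y hy => pow_mem (hclsub (hsp_mem y hy)) _),
        mapFn_prod f sm _ (fun y hy => pow_mem (hclsub (hsm_mem y hy)) _)]
      congr 1 <;> exact Finset.prod_congr rfl fun y hy => by
        rw [mapFn_pow f (hclsub (by first | exact hsp_mem y hy | exact hsm_mem y hy)) _]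
    -- monomial comparison
    have h4m := four_monomials hNTl.1
      (monExp Tl.cluster sp (mapFn S f) hg₁ fun y => (Sl.B x y).toNat)
      (monExp Tl.cluster sm (mapFn S f) hg₂ fun y => (-Sl.B x y).toNat)
      (monExp Tl.cluster tp (fun z => z) htp_mem fun z => (Tl.B ((mapFn S f) x) z).toNat)
      (monExp Tl.cluster tm (fun z => z) htm_mem fun z => (-Tl.B ((mapFn S f) x) z).toNat)
      (by simp only [monExp_aeval]; exact heq)
    have hsupp : ∀ z ∈ Tl.cluster, Tl.B ((mapFn S f) x) z ≠ 0 → z ∈ (mapFn S f) '' Sl.cluster := by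
      intro z hzc hbz
      have hid_inj : Set.InjOn (fun z : L => z) tp := fun a _ b _ h => h
      have hid_inj' : Set.InjOn (fun z : L => z) tm := fun a _ b _ h => h
      rcases hbz.lt_or_gt with hneg | hpos
      · -- B < 0 : z ∈ tm, use d₄
        have hz_tm : z ∈ tm := (hNTl.neg_finite hFxc).mem_toFinset.mpr ⟨hzc, hneg⟩
        have happ := monExp_apply tm (fun z => z) htm_mem
          (fun z => (-Tl.B ((mapFn S f) x) z).toNat) hid_inj' hz_tm
        have hne : monExp Tl.cluster tm (fun z => z) htm_mem
            (fun z => (-Tl.B ((mapFn S f) x) z).toNat) ⟨z, htm_mem z hz_tm⟩ ≠ 0 := by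
          rw [happ]
          omega
        rcases h4m.2 with hd | hd
        · rw [hd] at hne
          obtain ⟨y, hy, hyz⟩ := monExp_support sp (mapFn S f) hg₁ _ _ hne
          exact ⟨y, hsp_mem y hy, hyz⟩
        · rw [hd] at hne
          obtain ⟨y, hy, hyz⟩ := monExp_support sm (mapFn S f) hg₂ _ _ hne
          exact ⟨y, hsm_mem y hy, hyz⟩
      · -- B > 0 : z ∈ tp, use d₃
        have hz_tp : z ∈ tp := (hNTl.pos_finite hFxc).mem_toFinset.mpr ⟨hzc, hpos⟩
        have happ := monExp_apply tp (fun z => z) htp_mem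
          (fun z => (Tl.B ((mapFn S f) x) z).toNat) hid_inj hz_tp
        have hne : monExp Tl.cluster tp (fun z => z) htp_mem
            (fun z => (Tl.B ((mapFn S f) x) z).toNat) ⟨z, htp_mem z hz_tp⟩ ≠ 0 := by
          rw [happ]
          omega
        rcases h4m.1 with hd | hd
        · rw [hd] at hne
          obtain ⟨y, hy, hyz⟩ := monExp_support sp (mapFn S f) hg₁ _ _ hne
          exact ⟨y, hsp_mem y hy, hyz⟩
        · rw [hd] at hne
          obtain ⟨y, hy, hyz⟩ := monExp_support sm (mapFn S f) hg₂ _ _ hne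
          exact ⟨y, hsm_mem y hy, hyz⟩
    -- the image seed mutates the same way as T
    have hIsubT : Il.cluster ⊆ Tl.cluster := by rw [hc]; exact hsc
    have hsets1 : {z | z ∈ Il.cluster ∧ 0 < Tl.B ((mapFn S f) x) z}
        = {z | z ∈ Tl.cluster ∧ 0 < Tl.B ((mapFn S f) x) z} := by
      ext z
      constructor
      · rintro ⟨hz1, hz2⟩; exact ⟨hIsubT hz1, hz2⟩
      · rintro ⟨hz1, hz2⟩
        refine ⟨?_, hz2⟩
        rw [hc]
        exact hsupp z hz1 hz2.ne'
    have hsets2 : {z | z ∈ Il.cluster ∧ Tl.B ((mapFn S f) x) z < 0}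
        = {z | z ∈ Tl.cluster ∧ Tl.B ((mapFn S f) x) z < 0} := by
      ext z
      constructor
      · rintro ⟨hz1, hz2⟩; exact ⟨hIsubT hz1, hz2⟩
      · rintro ⟨hz1, hz2⟩
        refine ⟨?_, hz2⟩
        rw [hc]
        exact hsupp z hz1 hz2.ne
    have hmutI : Il.mutVar ((mapFn S f) x) = Tl.mutVar ((mapFn S f) x) := by
      unfold Seed.mutVar
      rw [hB, hsets1, hsets2]
    -- new stage equalities
    have hFx_exI : (mapFn S f) x ∈ Il.ex := by rw [he]; exact ⟨x, hxex, rfl⟩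
    have hIadm : (imageSeed S f).Admissible (m' ++ [(mapFn S f) x]) :=
      ((imageSeed S f).admissible_append_s11 m' [(mapFn S f) x]).mpr ⟨hI1, ⟨hFx_exI, trivial⟩⟩
    have himgdiff : ∀ s : Set K, s ⊆ Sl.cluster → (mapFn S f) '' (s \ {x}) = (mapFn S f) '' s \ {(mapFn S f) x} := by
      intro s hs
      ext z
      constructor
      · rintro ⟨y, ⟨hy, hyx⟩, rfl⟩
        refine ⟨⟨y, hy, rfl⟩, fun hzz => ?_⟩
        rw [Set.mem_singleton_iff] at hzz
        exact hyx (Set.mem_singleton_iff.mpr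
          (mapFn_injOn f hinj (hclsub (hs hy)) hxalg hzz))
      · rintro ⟨⟨y, hy, rfl⟩, hne⟩
        refine ⟨y, ⟨hy, fun hyx => ?_⟩, rfl⟩
        rw [Set.mem_singleton_iff] at hyx
        subst hyx
        exact hne rfl
    have hnew_c : ((imageSeed S f).mutateSeq (m' ++ [(mapFn S f) x])).cluster
        = (mapFn S f) '' (S.mutateSeq (l' ++ [x])).cluster := by
      rw [(imageSeed S f).mutateSeq_append_s11 m' [(mapFn S f) x], S.mutateSeq_append_s11 l' [x]]
      show (Il.mutate ((mapFn S f) x)).cluster = (mapFn S f) '' (Sl.mutate x).cluster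
      show insert (Il.mutVar ((mapFn S f) x)) (Il.cluster \ {(mapFn S f) x})
        = (mapFn S f) '' insert (Sl.mutVar x) (Sl.cluster \ {x})
      rw [Set.image_insert_eq, himgdiff Sl.cluster (le_refl _), hmutI, ← hstar, hc]
    have hnew_e : ((imageSeed S f).mutateSeq (m' ++ [(mapFn S f) x])).ex
        = (mapFn S f) '' (S.mutateSeq (l' ++ [x])).ex := by
      rw [(imageSeed S f).mutateSeq_append_s11 m' [(mapFn S f) x], S.mutateSeq_append_s11 l' [x]]
      show insert (Il.mutVar ((mapFn S f) x)) (Il.ex \ {(mapFn S f) x})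
        = (mapFn S f) '' insert (Sl.mutVar x) (Sl.ex \ {x})
      rw [Set.image_insert_eq, himgdiff Sl.ex Sl.ex_subset, hmutI, ← hstar, he]
    have hnew_B : ((imageSeed S f).mutateSeq (m' ++ [(mapFn S f) x])).B
        = (T.mutateSeq (m' ++ [(mapFn S f) x])).B := by
      rw [(imageSeed S f).mutateSeq_append_s11 m' [(mapFn S f) x], T.mutateSeq_append_s11 m' [(mapFn S f) x]]
      funext y z
      show mutB Il.B ((mapFn S f) x) (if y = Il.mutVar ((mapFn S f) x) then (mapFn S f) x else y)
          (if z = Il.mutVar ((mapFn S f) x) then (mapFn S f) x else z)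
        = mutB Tl.B ((mapFn S f) x) (if y = Tl.mutVar ((mapFn S f) x) then (mapFn S f) x else y)
          (if z = Tl.mutVar ((mapFn S f) x) then (mapFn S f) x else z)
      rw [hB, hmutI]
    have hTm_c : (T.mutateSeq (m' ++ [(mapFn S f) x])).cluster
        = insert (Tl.mutVar ((mapFn S f) x)) (Tl.cluster \ {(mapFn S f) x}) := by
      rw [T.mutateSeq_append_s11 m' [(mapFn S f) x]]; rfl
    have hnew_sc : (mapFn S f) '' (S.mutateSeq (l' ++ [x])).cluster
        ⊆ (T.mutateSeq (m' ++ [(mapFn S f) x])).cluster := by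
      rw [← hnew_c, hnew_c, hTm_c]
      rw [S.mutateSeq_append_s11 l' [x]]
      show (mapFn S f) '' (Sl.mutate x).cluster ⊆ _
      show (mapFn S f) '' insert (Sl.mutVar x) (Sl.cluster \ {x}) ⊆ _
      rw [Set.image_insert_eq, himgdiff Sl.cluster (le_refl _), hstar]
      exact Set.insert_subset_insert (Set.diff_subset_diff_left hsc)
    have hnew_se : (mapFn S f) '' (S.mutateSeq (l' ++ [x])).ex
        ⊆ (T.mutateSeq (m' ++ [(mapFn S f) x])).ex := by
      have hTm_e : (T.mutateSeq (m' ++ [(mapFn S f) x])).ex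
          = insert (Tl.mutVar ((mapFn S f) x)) (Tl.ex \ {(mapFn S f) x}) := by
        rw [T.mutateSeq_append_s11 m' [(mapFn S f) x]]; rfl
      rw [hTm_e, S.mutateSeq_append_s11 l' [x]]
      show (mapFn S f) '' insert (Sl.mutVar x) (Sl.ex \ {x}) ⊆ _
      rw [Set.image_insert_eq, himgdiff Sl.ex Sl.ex_subset, hstar]
      exact Set.insert_subset_insert (Set.diff_subset_diff_left hse)
    refine ⟨by rw [hmap]; exact hTadm, by rw [hmap]; exact hIadm, ?_, ?_, ?_, ?_, ?_⟩
    · rw [hmap]; exact hnew_c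
    · rw [hmap]; exact hnew_e
    · rw [hmap]; exact hnew_B
    · rw [hmap]; exact hnew_sc
    · rw [hmap]; exact hnew_se

end Master
section Final

variable {K : Type u} {L : Type v} [Field K] [Field L]

theorem master_rev (S : Seed K) (T : Seed L) (f : S.algebra →+* T.algebra)
    (hS : IsSeed S) (hT : IsSeed T) (hf : IsRCM S T f) (hinj : Function.Injective f) :
    ∀ m : List L, (imageSeed S f).Admissible m →
      ∃ l : List K, S.Admissible l ∧ m = l.map (mapFn S f) := by
  intro m
  induction m using List.reverseRecOn with
  | nil => exact fun _ => ⟨[], trivial, rfl⟩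
  | append_singleton m' z ih =>
    intro hadm
    obtain ⟨hadm', hz⟩ := ((imageSeed S f).admissible_append_s11 m' [z]).mp hadm
    obtain ⟨l', hl', rfl⟩ := ih hadm'
    have hmast := master S T f hS hT hf hinj l' hl'
    have hz1 : z ∈ ((imageSeed S f).mutateSeq (l'.map (mapFn S f))).ex := hz.1
    rw [hmast.2.2.2.1] at hz1
    obtain ⟨w, hw, rfl⟩ := hz1
    refine ⟨l' ++ [w], (S.admissible_append_s11 l' [w]).mpr ⟨hl', ⟨hw, trivial⟩⟩, ?_⟩
    simp

end Final

/-- every injective rooted cluster morphism is ideal: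
`f(A(Σ)) = A(f(Σ))`; consequently every `Σ`-admissible sequence is biadmissible and
cluster variables are sent to cluster variables. -/
theorem injective_isIdeal {K : Type u} {L : Type v} [Field K] [Field L]
    (S : Seed K) (T : Seed L) (hS : IsSeed S) (hT : IsSeed T)
    (f : S.algebra →+* T.algebra) (hf : IsRCM S T f)
    (hinj : Function.Injective f) :
    mapFn S f '' (S.algebra : Set K) = ((imageSeed S f).algebra : Set L) ∧
    (∀ l : List K, S.Admissible l → Biadmissible S T (mapFn S f) l) ∧
    mapFn S f '' S.clusterVars ⊆ T.clusterVars := by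
  have hmast := master S T f hS hT hf hinj
  have hrev := master_rev S T f hS hT hf hinj
  have part2 : ∀ l : List K, S.Admissible l → Biadmissible S T (mapFn S f) l :=
    fun l hl => ⟨hl, (hmast l hl).1⟩
  have hCV : (imageSeed S f).clusterVars = mapFn S f '' S.clusterVars := by
    apply Set.Subset.antisymm
    · intro z hz
      obtain ⟨m, hm, hzm⟩ := Set.mem_iUnion₂.mp hz
      obtain ⟨l, hl, rfl⟩ := hrev m hm
      rw [(hmast l hl).2.2.1] at hzm
      obtain ⟨y, hy, rfl⟩ := hzm
      exact ⟨y, S.cluster_subset_clusterVars l hl hy, rfl⟩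
    · rintro z ⟨y, hy, rfl⟩
      obtain ⟨l, hl, hyl⟩ := Set.mem_iUnion₂.mp hy
      have hz' : mapFn S f y ∈ ((imageSeed S f).mutateSeq (l.map (mapFn S f))).cluster := by
        rw [(hmast l hl).2.2.1]
        exact ⟨y, hyl, rfl⟩
      exact (imageSeed S f).cluster_subset_clusterVars _ (hmast l hl).2.1 hz'
  have part3 : mapFn S f '' S.clusterVars ⊆ T.clusterVars := by
    rintro z ⟨y, hy, rfl⟩
    obtain ⟨l, hl, hyl⟩ := Set.mem_iUnion₂.mp hy
    exact T.cluster_subset_clusterVars _ (hmast l hl).1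
      ((hmast l hl).2.2.2.2.2.1 ⟨y, hyl, rfl⟩)
  refine ⟨?_, part2, part3⟩
  apply Set.Subset.antisymm
  · rintro z ⟨a, ha, rfl⟩
    show mapFn S f a ∈ Subring.closure (imageSeed S f).clusterVars
    rw [hCV]
    have hmem : a ∈ Subring.closure S.clusterVars := ha
    refine Subring.closure_induction
      (p := fun b _ => mapFn S f b ∈ Subring.closure (mapFn S f '' S.clusterVars))
      ?_ ?_ ?_ ?_ ?_ ?_ hmem
    · intro y hy
      exact Subring.subset_closure ⟨y, hy, rfl⟩
    · show mapFn S f 0 ∈ _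
      rw [mapFn_zero f]; exact zero_mem _
    · show mapFn S f 1 ∈ _
      rw [mapFn_one f]; exact one_mem _
    · intro a b ha' hb' hpa hpb
      show mapFn S f (a + b) ∈ _
      rw [mapFn_add f ha' hb']
      exact add_mem hpa hpb
    · intro a ha' hpa
      show mapFn S f (-a) ∈ _
      rw [mapFn_neg f ha']
      exact neg_mem hpa
    · intro a b ha' hb' hpa hpb
      show mapFn S f (a * b) ∈ _
      rw [mapFn_mul f ha' hb']
      exact mul_mem hpa hpb
  · intro z hz
    have hle : Subring.closure (imageSeed S f).clusterVars
        ≤ ((T.algebra.subtype).comp f).range := by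
      rw [Subring.closure_le, hCV]
      rintro w ⟨y, hy, rfl⟩
      exact ⟨⟨y, S.clusterVars_subset_algebra hy⟩, (mapFn_of_mem f _).symm⟩
    obtain ⟨u, hu⟩ := RingHom.mem_range.mp (hle hz)
    exact ⟨u.1, u.2, by rw [mapFn_of_mem f u.2]; exact hu⟩
end
end
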